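/- arXiv:1907.12066 — 6 statements merged into one kernel-verified Lean document; each statement's English description precedes it below -/
import Mathlib

section
/- Let x₁ > x₂ > … > x_k ≥ 0 be real numbers with x₁ > 0, let δ satisfy 0 < δ ≤ 1/x₁, and let f(x) = log₂(1 + δx). Fix nonnegative integers n₀ ≤ n₁ with n₀ + n₁ = k. For a binary sequence s ∈ {0,1}^k with composition [n₀, n₁] (i.e., s contains exactly n₀ zeros and n₁ ones), define the cost c(s) = Σ_{i=1}^k f( x_i / (n_{s_i} − n_{s_i}(s₁^{i−1})) ), where n_b(s₁^{i−1}) is the number of occurrences of the bit b among the first i−1 entries of s. Then the sequence z = [0 … 0 1 … 1], consisting of n₀ zeros followed by n₁ ones, maximizes c(s) over all binary sequences s of length k with composition [n₀, n₁]. -/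
/-- The number of occurrences of the bit `s i` among the first `i` entries of `s`. -/
def prefixCount {k : ℕ} (s : Fin k → Bool) (i : Fin k) : ℕ :=
  (Finset.univ.filter (fun j : Fin k => j < i ∧ s j = s i)).card

/-- The cost `c(s) = Σᵢ log₂(1 + δ · xᵢ / (n_{sᵢ} − n_{sᵢ}(s₁^{i−1})))`. -/
noncomputable def binCost {k : ℕ} (n₀ n₁ : ℕ) (δ : ℝ) (x : Fin k → ℝ)
    (s : Fin k → Bool) : ℝ :=
  ∑ i : Fin k, Real.logb 2
    (1 + δ * (x i / ((if s i then (n₁ : ℝ) else (n₀ : ℝ)) - (prefixCount s i : ℝ))))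

/-! ### Auxiliary list-level machinery -/

/-- The descending list `[n, n-1, …, 1]`. -/
def descL : ℕ → List ℕ
  | 0 => []
  | n+1 => (n+1) :: descL n

/-- The list of denominators along a binary sequence. -/
def Dl : ℕ → ℕ → List Bool → List ℕ
  | _, _, [] => []
  | n₀, n₁, (b :: bs) =>
      (if b then n₁ else n₀) :: (if b then Dl n₀ (n₁-1) bs else Dl (n₀-1) n₁ bs)

/-- Cost of a list of values paired with a list of denominators. -/
noncomputable def dcost (δ : ℝ) : List ℝ → List ℕ → ℝ
  | x :: xs, d :: ds => Real.logb 2 (1 + δ * (x / (d : ℝ))) + dcost δ xs ds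
  | _, _ => 0

@[simp] lemma dcost_nil (δ : ℝ) (dl : List ℕ) : dcost δ [] dl = 0 := by
  cases dl <;> rfl

@[simp] lemma dcost_nil' (δ : ℝ) (xl : List ℝ) : dcost δ xl [] = 0 := by
  cases xl <;> rfl

@[simp] lemma dcost_cons (δ : ℝ) (x : ℝ) (xs : List ℝ) (d : ℕ) (ds : List ℕ) :
    dcost δ (x :: xs) (d :: ds) = Real.logb 2 (1 + δ * (x / (d : ℝ))) + dcost δ xs ds := rfl

/-- The basic exchange inequality. -/
lemma swap_ineq {δ u v : ℝ} (hδ : 0 ≤ δ) (hv : 0 ≤ v) (hvu : v ≤ u) {c d : ℝ}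
    (hc : 0 < c) (hcd : c ≤ d) :
    Real.logb 2 (1 + δ * (u / d)) + Real.logb 2 (1 + δ * (v / c)) ≤
    Real.logb 2 (1 + δ * (u / c)) + Real.logb 2 (1 + δ * (v / d)) := by
  have hd : 0 < d := lt_of_lt_of_le hc hcd
  have hu : 0 ≤ u := le_trans hv hvu
  have h1 : 0 < 1 + δ * (u / d) := by positivity
  have h2 : 0 < 1 + δ * (v / c) := by positivity
  have h3 : 0 < 1 + δ * (u / c) := by positivity
  have h4 : 0 < 1 + δ * (v / d) := by positivity
  rw [← Real.logb_mul h1.ne' h2.ne', ← Real.logb_mul h3.ne' h4.ne']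
  apply Real.logb_le_logb_of_le (by norm_num : (1:ℝ) < 2) (by positivity)
  have key : 0 ≤ δ * (u - v) * (1/c - 1/d) := by
    apply mul_nonneg (mul_nonneg hδ (by linarith))
    have := one_div_le_one_div_of_le hc hcd
    linarith
  have e : (1 + δ * (u / c)) * (1 + δ * (v / d)) - (1 + δ * (u / d)) * (1 + δ * (v / c))
      = δ * (u - v) * (1/c - 1/d) := by
    field_simp
    ring
  linarith [e, key]

lemma mono_ineq {δ u : ℝ} (hδ : 0 ≤ δ) (hu : 0 ≤ u) {c d : ℝ} (hc : 0 < c) (hcd : c ≤ d) :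
    Real.logb 2 (1 + δ * (u / d)) ≤ Real.logb 2 (1 + δ * (u / c)) := by
  have hd : 0 < d := lt_of_lt_of_le hc hcd
  apply Real.logb_le_logb_of_le (by norm_num : (1:ℝ) < 2) (by positivity)
  have h : u / d ≤ u / c := by
    apply div_le_div_of_nonneg_left hu hc hcd
  nlinarith [mul_le_mul_of_nonneg_left h hδ]

/-- Moving a large denominator from the front past a descending block. -/
lemma chain (δ : ℝ) (hδ : 0 ≤ δ) (a : ℕ) : ∀ (B : ℕ) (rest : List ℕ) (xl : List ℝ), a < B →
    xl.Pairwise (fun p q => q ≤ p) → (∀ y ∈ xl, 0 ≤ y) →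
    dcost δ xl (B :: (descL a ++ rest)) ≤ dcost δ xl (descL a ++ (B :: rest)) := by
  induction a with
  | zero => intro B rest xl _ _ _; simp [descL]
  | succ a ih =>
    intro B rest xl hB hs hnn
    match xl with
    | [] => simp
    | [x] =>
        have hx : (0:ℝ) ≤ x := hnn x (by simp)
        have hc : (0:ℝ) < ((a+1 : ℕ) : ℝ) := by positivity
        have hcd : ((a+1 : ℕ) : ℝ) ≤ (B : ℝ) := by exact_mod_cast hB.le
        simpa [descL] using mono_ineq hδ hx hc hcd
    | x :: y :: tl =>
        have hsy := (List.pairwise_cons.mp hs).2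
        have hyx : y ≤ x := (List.pairwise_cons.mp hs).1 y (by simp)
        have hy : (0:ℝ) ≤ y := hnn y (by simp)
        have hc : (0:ℝ) < ((a+1 : ℕ) : ℝ) := by positivity
        have hcd : ((a+1 : ℕ) : ℝ) ≤ (B : ℝ) := by exact_mod_cast hB.le
        have hswap := swap_ineq hδ hy hyx hc hcd
        have hIH := ih B rest (y :: tl) (lt_of_le_of_lt (Nat.le_succ a) hB)
          hsy (fun z hz => hnn z (by simp [hz]))
        simp only [descL, List.cons_append, dcost_cons] at *
        linarith

/-- Main list-level lemma: the sorted pattern maximizes the cost. -/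
lemma main_list (δ : ℝ) (hδ : 0 ≤ δ) :
    ∀ (sl : List Bool) (xl : List ℝ),
      xl.Pairwise (fun p q => q ≤ p) → (∀ y ∈ xl, 0 ≤ y) →
      dcost δ xl (Dl (sl.count false) (sl.count true) sl) ≤
      dcost δ xl (descL (min (sl.count false) (sl.count true)) ++
                  descL (max (sl.count false) (sl.count true))) := by
  intro sl
  induction sl with
  | nil => intro xl _ _; simp [Dl, descL]
  | cons b bs ih =>
    intro xl hs hnn
    match xl with
    | [] => simp
    | x :: xs =>
      have hsx := (List.pairwise_cons.mp hs).2
      have hnnx : ∀ y ∈ xs, 0 ≤ y := fun z hz => hnn z (by simp [hz])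
      have hIH := ih xs hsx hnnx
      set m₀ := bs.count false with hm₀
      set m₁ := bs.count true with hm₁
      cases b with
      | false =>
        have hc0 : (false :: bs).count false = m₀ + 1 := by simp [List.count_cons, hm₀]
        have hc1 : (false :: bs).count true = m₁ := by simp [List.count_cons, hm₁]
        rw [hc0, hc1]
        have hD : Dl (m₀+1) m₁ (false :: bs) = (m₀+1) :: Dl m₀ m₁ bs := by simp [Dl]
        rw [hD]
        rcases le_or_gt (m₀+1) m₁ with hcase | hcase
        · have e1 : min m₀ m₁ = m₀ := by omega
          have e2 : max m₀ m₁ = m₁ := by omega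
          have e3 : min (m₀+1) m₁ = m₀+1 := by omega
          have e4 : max (m₀+1) m₁ = m₁ := by omega
          rw [e1, e2] at hIH
          rw [e3, e4]
          have : descL (m₀+1) ++ descL m₁ = (m₀+1) :: (descL m₀ ++ descL m₁) := by
            simp [descL]
          rw [this, dcost_cons, dcost_cons]
          linarith
        · have e1 : min m₀ m₁ = m₁ := by omega
          have e2 : max m₀ m₁ = m₀ := by omega
          have e3 : min (m₀+1) m₁ = m₁ := by omega
          have e4 : max (m₀+1) m₁ = m₀+1 := by omega
          rw [e1, e2] at hIH
          rw [e3, e4]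
          have step1 : dcost δ (x :: xs) ((m₀+1) :: Dl m₀ m₁ bs) ≤
              dcost δ (x :: xs) ((m₀+1) :: (descL m₁ ++ descL m₀)) := by
            rw [dcost_cons, dcost_cons]; linarith
          have step2 := chain δ hδ m₁ (m₀+1) (descL m₀) (x :: xs) (by omega) hs hnn
          have e5 : descL m₁ ++ ((m₀+1) :: descL m₀) = descL m₁ ++ descL (m₀+1) := by
            simp [descL]
          rw [e5] at step2
          exact le_trans step1 step2
      | true =>
        have hc0 : (true :: bs).count false = m₀ := by simp [List.count_cons, hm₀]
        have hc1 : (true :: bs).count true = m₁ + 1 := by simp [List.count_cons, hm₁]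
        rw [hc0, hc1]
        have hD : Dl m₀ (m₁+1) (true :: bs) = (m₁+1) :: Dl m₀ m₁ bs := by simp [Dl]
        rw [hD]
        rcases le_or_gt (m₁+1) m₀ with hcase | hcase
        · have e1 : min m₀ m₁ = m₁ := by omega
          have e2 : max m₀ m₁ = m₀ := by omega
          have e3 : min m₀ (m₁+1) = m₁+1 := by omega
          have e4 : max m₀ (m₁+1) = m₀ := by omega
          rw [e1, e2] at hIH
          rw [e3, e4]
          have : descL (m₁+1) ++ descL m₀ = (m₁+1) :: (descL m₁ ++ descL m₀) := by
            simp [descL]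
          rw [this, dcost_cons, dcost_cons]
          linarith
        · have e1 : min m₀ m₁ = m₀ := by omega
          have e2 : max m₀ m₁ = m₁ := by omega
          have e3 : min m₀ (m₁+1) = m₀ := by omega
          have e4 : max m₀ (m₁+1) = m₁+1 := by omega
          rw [e1, e2] at hIH
          rw [e3, e4]
          have step1 : dcost δ (x :: xs) ((m₁+1) :: Dl m₀ m₁ bs) ≤
              dcost δ (x :: xs) ((m₁+1) :: (descL m₀ ++ descL m₁)) := by
            rw [dcost_cons, dcost_cons]; linarith
          have step2 := chain δ hδ m₀ (m₁+1) (descL m₁) (x :: xs) (by omega) hs hnn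
          have e5 : descL m₀ ++ ((m₁+1) :: descL m₁) = descL m₀ ++ descL (m₁+1) := by
            simp [descL]
          rw [e5] at step2
          exact le_trans step1 step2

/-! ### Bridging `binCost` with `dcost` -/

lemma prefixCount_zero {k : ℕ} (s : Fin (k+1) → Bool) : prefixCount s 0 = 0 := by
  simp [prefixCount]

lemma prefixCount_succ {k : ℕ} (s : Fin (k+1) → Bool) (i : Fin k) :
    prefixCount s i.succ =
      (if s 0 = s i.succ then 1 else 0) + prefixCount (fun j => s j.succ) i := by
  unfold prefixCount
  rw [Finset.card_filter, Finset.card_filter, Fin.sum_univ_succ]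
  congr 1
  · simp [Fin.succ_pos]
  · apply Finset.sum_congr rfl
    intro j _
    simp [Fin.succ_lt_succ_iff]

lemma bridge (δ : ℝ) : ∀ (k : ℕ) (x : Fin k → ℝ) (s : Fin k → Bool) (n₀ n₁ : ℕ),
    (∀ i, prefixCount s i < if s i then n₁ else n₀) →
    (∑ i : Fin k, Real.logb 2
      (1 + δ * (x i / ((if s i then (n₁ : ℝ) else (n₀ : ℝ)) - (prefixCount s i : ℝ))))) =
    dcost δ (List.ofFn x) (Dl n₀ n₁ (List.ofFn s)) := by
  intro k
  induction k with
  | zero => intro x s n₀ n₁ _; simp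
  | succ k ih =>
    intro x s n₀ n₁ h
    rw [Fin.sum_univ_succ, List.ofFn_succ, List.ofFn_succ]
    have h0 : prefixCount s 0 = 0 := prefixCount_zero s
    have hb0 := h 0
    rw [h0] at hb0
    cases hs0 : s 0 with
    | true =>
      have hn₁ : 1 ≤ n₁ := by simp [hs0] at hb0; omega
      have hDl : Dl n₀ n₁ (true :: List.ofFn (fun i => s i.succ)) =
          n₁ :: Dl n₀ (n₁-1) (List.ofFn (fun i => s i.succ)) := by simp [Dl]
      rw [hDl, dcost_cons]
      congr 1
      · rw [h0]; norm_num
      · rw [← ih (fun i => x i.succ) (fun i => s i.succ) n₀ (n₁-1) ?_]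
        · apply Finset.sum_congr rfl
          intro i _
          have hpc := prefixCount_succ s i
          rw [hs0] at hpc
          cases hsi : s i.succ with
          | true =>
            have h1 : prefixCount s i.succ = 1 + prefixCount (fun j => s j.succ) i := by
              simpa [hsi] using hpc
            simp only [h1, hsi]
            rw [Nat.cast_sub hn₁]
            push_cast
            ring_nf
          | false =>
            have h1 : prefixCount s i.succ = prefixCount (fun j => s j.succ) i := by
              simpa [hsi] using hpc
            simp only [h1, hsi]
            norm_num
        · intro i
          have hpc := prefixCount_succ s i
          rw [hs0] at hpc
          have hlt := h i.succ
          show prefixCount (fun j => s j.succ) i < if s i.succ = true then n₁ - 1 else n₀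
          cases hsi : s i.succ with
          | true =>
            have h1 : prefixCount s i.succ = 1 + prefixCount (fun j => s j.succ) i := by
              simpa [hsi] using hpc
            have h2 : prefixCount s i.succ < n₁ := by simpa [hsi] using hlt
            simp
            omega
          | false =>
            have h1 : prefixCount s i.succ = prefixCount (fun j => s j.succ) i := by
              simpa [hsi] using hpc
            have h2 : prefixCount s i.succ < n₀ := by simpa [hsi] using hlt
            simp
            omega
    | false =>
      have hn₀ : 1 ≤ n₀ := by simp [hs0] at hb0; omega
      have hDl : Dl n₀ n₁ (false :: List.ofFn (fun i => s i.succ)) =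
          n₀ :: Dl (n₀-1) n₁ (List.ofFn (fun i => s i.succ)) := by simp [Dl]
      rw [hDl, dcost_cons]
      congr 1
      · rw [h0]; norm_num
      · rw [← ih (fun i => x i.succ) (fun i => s i.succ) (n₀-1) n₁ ?_]
        · apply Finset.sum_congr rfl
          intro i _
          have hpc := prefixCount_succ s i
          rw [hs0] at hpc
          cases hsi : s i.succ with
          | false =>
            have h1 : prefixCount s i.succ = 1 + prefixCount (fun j => s j.succ) i := by
              simpa [hsi] using hpc
            simp only [h1, hsi]
            rw [Nat.cast_sub hn₀]
            push_cast
            ring_nf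
          | true =>
            have h1 : prefixCount s i.succ = prefixCount (fun j => s j.succ) i := by
              simpa [hsi] using hpc
            simp only [h1, hsi]
            norm_num
        · intro i
          have hpc := prefixCount_succ s i
          rw [hs0] at hpc
          have hlt := h i.succ
          show prefixCount (fun j => s j.succ) i < if s i.succ = true then n₁ else n₀ - 1
          cases hsi : s i.succ with
          | false =>
            have h1 : prefixCount s i.succ = 1 + prefixCount (fun j => s j.succ) i := by
              simpa [hsi] using hpc
            have h2 : prefixCount s i.succ < n₀ := by simpa [hsi] using hlt
            simp
            omega
          | true =>
            have h1 : prefixCount s i.succ = prefixCount (fun j => s j.succ) i := by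
              simpa [hsi] using hpc
            have h2 : prefixCount s i.succ < n₁ := by simpa [hsi] using hlt
            simp
            omega

lemma count_ofFn : ∀ {k : ℕ} (s : Fin k → Bool) (b : Bool),
    (List.ofFn s).count b = (Finset.univ.filter (fun i => s i = b)).card := by
  intro k
  induction k with
  | zero => intro s b; simp
  | succ k ih =>
    intro s b
    rw [List.ofFn_succ, List.count_cons, ih (fun i => s i.succ) b,
      Finset.card_filter, Finset.card_filter, Fin.sum_univ_succ]
    by_cases h : s 0 = b <;> simp [h, Nat.add_comm]

lemma prefixCount_lt {k : ℕ} (s : Fin k → Bool) (i : Fin k) :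
    prefixCount s i < (Finset.univ.filter (fun j => s j = s i)).card := by
  apply Finset.card_lt_card
  rw [Finset.ssubset_iff_of_subset]
  · exact ⟨i, by simp, by simp⟩
  · intro j hj
    simp only [Finset.mem_filter, Finset.mem_univ, true_and] at hj ⊢
    exact hj.2

lemma ofFn_z (k n₀ n₁ : ℕ) (hcomp : n₀ + n₁ = k) :
    List.ofFn (fun i : Fin k => decide (n₀ ≤ (i : ℕ))) =
      List.replicate n₀ false ++ List.replicate n₁ true := by
  apply List.ext_getElem
  · simp; omega
  · intro i h1 h2
    simp only [List.getElem_ofFn]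
    rcases lt_or_ge i n₀ with hi | hi
    · rw [List.getElem_append_left (by simpa using hi)]
      simp [List.getElem_replicate]
      omega
    · rw [List.getElem_append_right (by simpa using hi)]
      simp [List.getElem_replicate, hi]

lemma Dl_true : ∀ (q n₀ : ℕ), Dl n₀ q (List.replicate q true) = descL q := by
  intro q
  induction q with
  | zero => intro n₀; rfl
  | succ q ih => intro n₀; simp [Dl, descL, List.replicate, ih]

lemma Dl_pattern : ∀ (p q : ℕ), Dl p q (List.replicate p false ++ List.replicate q true) =
    descL p ++ descL q := by
  intro p
  induction p with
  | zero => intro q; simp [descL, Dl_true]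
  | succ p ih => intro q; simp [Dl, descL, List.replicate, ih]

/-- Binary maximizer of the cost function: the sequence of `n₀` zeros followed by
    `n₁` ones maximizes the cost over all binary sequences with composition `[n₀, n₁]`. -/
theorem binCost_le_sorted (k n₀ n₁ : ℕ) (hk : 0 < k) (hcomp : n₀ + n₁ = k)
    (hle : n₀ ≤ n₁) (x : Fin k → ℝ) (δ : ℝ)
    (hxdec : ∀ i j : Fin k, i < j → x j < x i) (hxnn : ∀ i, 0 ≤ x i)
    (hx1 : 0 < x ⟨0, hk⟩) (hδ : 0 < δ) (hδ1 : δ ≤ 1 / x ⟨0, hk⟩)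
    (s : Fin k → Bool)
    (hs₀ : (Finset.univ.filter (fun i => s i = false)).card = n₀)
    (hs₁ : (Finset.univ.filter (fun i => s i = true)).card = n₁) :
    binCost n₀ n₁ δ x s ≤
      binCost n₀ n₁ δ x (fun i : Fin k => decide (n₀ ≤ (i : ℕ))) := by
  set z : Fin k → Bool := fun i : Fin k => decide (n₀ ≤ (i : ℕ)) with hz
  have hzofFn : List.ofFn z = List.replicate n₀ false ++ List.replicate n₁ true :=
    ofFn_z k n₀ n₁ hcomp
  -- counts of z
  have hz₀ : (Finset.univ.filter (fun i => z i = false)).card = n₀ := by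
    rw [← count_ofFn z false, hzofFn]; simp [List.count_replicate]
  have hz₁ : (Finset.univ.filter (fun i => z i = true)).card = n₁ := by
    rw [← count_ofFn z true, hzofFn]; simp [List.count_replicate]
  -- prefix bounds
  have hps : ∀ i, prefixCount s i < if s i then n₁ else n₀ := by
    intro i
    have := prefixCount_lt s i
    cases hsi : s i with
    | true => rw [hsi] at this; rw [← hs₁]; simpa using this
    | false => rw [hsi] at this; rw [← hs₀]; simpa using this
  have hpz : ∀ i, prefixCount z i < if z i then n₁ else n₀ := by
    intro i
    have := prefixCount_lt z i
    cases hsi : z i with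
    | true => rw [hsi] at this; rw [← hz₁]; simpa using this
    | false => rw [hsi] at this; rw [← hz₀]; simpa using this
  have hbs := bridge δ k x s n₀ n₁ hps
  have hbz := bridge δ k x z n₀ n₁ hpz
  have hsorted : (List.ofFn x).Pairwise (fun p q => q ≤ p) := by
    rw [List.pairwise_ofFn]
    intro i j hij
    exact (hxdec i j hij).le
  have hnn : ∀ y ∈ List.ofFn x, 0 ≤ y := by
    intro y hy
    rw [List.mem_ofFn] at hy
    obtain ⟨i, rfl⟩ := hy
    exact hxnn i
  have hcount₀ : (List.ofFn s).count false = n₀ := by rw [count_ofFn]; exact hs₀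
  have hcount₁ : (List.ofFn s).count true = n₁ := by rw [count_ofFn]; exact hs₁
  have hmain := main_list δ hδ.le (List.ofFn s) (List.ofFn x) hsorted hnn
  rw [hcount₀, hcount₁, min_eq_left hle, max_eq_right hle] at hmain
  have hDz : Dl n₀ n₁ (List.ofFn z) = descL n₀ ++ descL n₁ := by
    rw [hzofFn, Dl_pattern]
  calc binCost n₀ n₁ δ x s = dcost δ (List.ofFn x) (Dl n₀ n₁ (List.ofFn s)) := hbs
    _ ≤ dcost δ (List.ofFn x) (descL n₀ ++ descL n₁) := hmain
    _ = dcost δ (List.ofFn x) (Dl n₀ n₁ (List.ofFn z)) := by rw [hDz]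
    _ = binCost n₀ n₁ δ x z := hbz.symm
end

section
/- Let x₁ > x₂ > … > x_k ≥ 0 be real numbers with x₁ > 0, let δ satisfy 0 < δ ≤ 1/x₁, and let f(x) = log₂(1 + δx). Fix nonnegative integers n₀ < n₁ with n₀ + n₁ = k. For a binary sequence s ∈ {0,1}^k with composition [n₀, n₁], define the cost c(s) = Σ_{i=1}^k f( x_i / (n_{s_i} − n_{s_i}(s₁^{i−1})) ). Then the sequence z consisting of n₀ zeros followed by n₁ ones is the UNIQUE maximizer of c(s) over all binary sequences of length k with composition [n₀, n₁]; that is, every other such sequence s ≠ z satisfies c(s) < c(z). -/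
open Finset

namespace BinAux

/-- denominator as a natural number -/
def den (n₀ n₁ : ℕ) {k : ℕ} (s : Fin k → Bool) (i : Fin k) : ℕ :=
  (if s i then n₁ else n₀) - prefixCount s i

noncomputable def psi (c : ℕ) (u : ℝ) : ℝ :=
  (Real.logb 2 ((c : ℝ) + 1 + u) - Real.logb 2 ((c : ℝ) + u))
    - (Real.logb 2 ((c : ℝ) + 1) - Real.logb 2 (c : ℝ))

lemma tele (g : ℕ → ℝ) (d : ℕ) (hd : 1 ≤ d) :
    ∑ c ∈ Finset.Ico 1 d, (g (c + 1) - g c) = g d - g 1 := by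
  induction d, hd using Nat.le_induction with
  | base => simp
  | succ n hn ih => rw [Finset.sum_Ico_succ_top hn, ih]; ring

lemma abel_id (E ψ : ℕ → ℝ) (n : ℕ) :
    ∑ i ∈ Finset.range n, (E (i + 1) - E i) * ψ i
      = E n * ψ n - E 0 * ψ 0 + ∑ i ∈ Finset.range n, E (i + 1) * (ψ i - ψ (i + 1)) := by
  induction n with
  | zero => simp
  | succ n ih => rw [Finset.sum_range_succ, Finset.sum_range_succ, ih]; ring

lemma psi_anti (c : ℕ) (hc : 1 ≤ c) {v u : ℝ} (hv : 0 ≤ v) (hvu : v < u) :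
    psi c u < psi c v := by
  have hc' : (1 : ℝ) ≤ (c : ℝ) := by exact_mod_cast hc
  have hu : (0:ℝ) ≤ u := le_of_lt (lt_of_le_of_lt hv hvu)
  have h1 : (0:ℝ) < (c:ℝ) + 1 + u := by linarith
  have h2 : (0:ℝ) < (c:ℝ) + u := by linarith
  have h3 : (0:ℝ) < (c:ℝ) + 1 + v := by linarith
  have h4 : (0:ℝ) < (c:ℝ) + v := by linarith
  have key : Real.logb 2 (((c:ℝ) + 1 + u) * ((c:ℝ) + v))
      < Real.logb 2 (((c:ℝ) + 1 + v) * ((c:ℝ) + u)) := by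
    apply Real.logb_lt_logb one_lt_two (by positivity)
    nlinarith
  rw [Real.logb_mul (ne_of_gt h1) (ne_of_gt h4), Real.logb_mul (ne_of_gt h3) (ne_of_gt h2)] at key
  unfold psi
  linarith

lemma psi_anti_le (c : ℕ) (hc : 1 ≤ c) {v u : ℝ} (hv : 0 ≤ v) (hvu : v ≤ u) :
    psi c u ≤ psi c v := by
  rcases eq_or_lt_of_le hvu with h | h
  · rw [h]
  · exact le_of_lt (psi_anti c hc hv h)

lemma logb_decomp (d : ℕ) (hd : 1 ≤ d) (u : ℝ) (hu : 0 ≤ u) :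
    Real.logb 2 (1 + u / (d : ℝ))
      = Real.logb 2 (1 + u) + ∑ c ∈ Finset.Ico 1 d, psi c u := by
  have hd' : (0:ℝ) < (d:ℝ) := by exact_mod_cast hd
  have h1 : (1 : ℝ) + u / d = ((d : ℝ) + u) / d := by field_simp
  have hdu : (0:ℝ) < (d:ℝ) + u := by linarith
  rw [h1, Real.logb_div (ne_of_gt hdu) (ne_of_gt hd')]
  have e1 : ∑ c ∈ Finset.Ico 1 d, psi c u
      = (∑ c ∈ Finset.Ico 1 d,
          (Real.logb 2 ((c:ℝ) + 1 + u) - Real.logb 2 ((c:ℝ) + u)))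
        - ∑ c ∈ Finset.Ico 1 d,
          (Real.logb 2 ((c:ℝ) + 1) - Real.logb 2 (c:ℝ)) := by
    rw [← Finset.sum_sub_distrib]; rfl
  have t1 := tele (fun c : ℕ => Real.logb 2 ((c:ℝ) + u)) d hd
  have t2 := tele (fun c : ℕ => Real.logb 2 (c:ℝ)) d hd
  simp only [Nat.cast_add, Nat.cast_one] at t1 t2
  have c1 : ∀ c : ℕ, ((c:ℝ) + 1 + u) = ((c:ℝ) + 1) + u := by intro c; ring
  rw [e1]
  rw [show (∑ c ∈ Finset.Ico 1 d, (Real.logb 2 ((c:ℝ) + 1 + u) - Real.logb 2 ((c:ℝ) + u)))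
      = Real.logb 2 ((d:ℝ) + u) - Real.logb 2 ((1:ℝ) + u) by
    rw [← t1]]
  rw [show (∑ c ∈ Finset.Ico 1 d, (Real.logb 2 ((c:ℝ) + 1) - Real.logb 2 (c:ℝ)))
      = Real.logb 2 (d:ℝ) - Real.logb 2 ((1:ℝ)) by rw [← t2]]
  rw [Real.logb_one]
  ring



lemma card_val_lt (k a : ℕ) (h : a ≤ k) :
    (Finset.univ.filter (fun i : Fin k => i.val < a)).card = a := by
  have he : (Finset.univ.filter (fun i : Fin k => i.val < a))
      = (Finset.range a).attachFin
        (fun m hm => lt_of_lt_of_le (Finset.mem_range.mp hm) h) := by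
    ext i
    simp [Finset.mem_attachFin]
  rw [he, Finset.card_attachFin, Finset.card_range]

lemma pc_lt_pc {k : ℕ} (s : Fin k → Bool) {i j : Fin k} (hij : i < j) (hb : s i = s j) :
    prefixCount s i < prefixCount s j := by
  apply Finset.card_lt_card
  rw [Finset.ssubset_iff_of_subset]
  · exact ⟨i, by simp [hij, hb], by simp⟩
  · intro a ha
    simp only [Finset.mem_filter, Finset.mem_univ, true_and] at ha ⊢
    exact ⟨lt_trans ha.1 hij, ha.2.trans hb⟩

lemma pc_lt_card {k : ℕ} (s : Fin k → Bool) (i : Fin k) :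
    prefixCount s i < (Finset.univ.filter (fun j : Fin k => s j = s i)).card := by
  apply Finset.card_lt_card
  rw [Finset.ssubset_iff_of_subset]
  · exact ⟨i, by simp, by simp⟩
  · intro a ha
    simp only [Finset.mem_filter, Finset.mem_univ, true_and] at ha ⊢
    exact ha.2

lemma pc_le {k : ℕ} (s : Fin k → Bool) (i : Fin k) : prefixCount s i ≤ i.val := by
  have : prefixCount s i ≤ (Finset.univ.filter (fun j : Fin k => j.val < i.val)).card := by
    apply Finset.card_le_card
    intro a ha
    simp only [Finset.mem_filter, Finset.mem_univ, true_and] at ha ⊢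
    exact ha.1
  rwa [card_val_lt k i.val (le_of_lt i.isLt)] at this

lemma image_pc {k : ℕ} (s : Fin k → Bool) (b : Bool) (m : ℕ) :
    (Finset.univ.filter (fun i : Fin k => i.val < m ∧ s i = b)).image (prefixCount s)
      = Finset.range ((Finset.univ.filter (fun i : Fin k => i.val < m ∧ s i = b)).card) := by
  set T := Finset.univ.filter (fun i : Fin k => i.val < m ∧ s i = b) with hT
  have hinj : Set.InjOn (prefixCount s) T := by
    intro i hi j hj hpc
    simp only [hT, Finset.coe_filter, Set.mem_setOf_eq, Finset.mem_univ, true_and] at hi hj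
    by_contra hne
    rcases lt_or_gt_of_ne (fun h : i = j => hne h) with h | h
    · exact absurd hpc (ne_of_lt (pc_lt_pc s h (hi.2.trans hj.2.symm)))
    · exact absurd hpc.symm (ne_of_lt (pc_lt_pc s h (hj.2.trans hi.2.symm)))
  apply Finset.eq_of_subset_of_card_le
  · intro v hv
    rw [Finset.mem_image] at hv
    obtain ⟨i, hi, rfl⟩ := hv
    rw [Finset.mem_range]
    apply Finset.card_lt_card
    rw [Finset.ssubset_iff_of_subset]
    · exact ⟨i, hi, by simp⟩
    · intro a ha
      simp only [Finset.mem_filter, Finset.mem_univ, true_and] at ha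
      simp only [hT, Finset.mem_filter, Finset.mem_univ, true_and] at hi ⊢
      exact ⟨lt_trans (show a.val < i.val from ha.1) hi.1, ha.2.trans hi.2⟩
  · rw [Finset.card_range, Finset.card_image_of_injOn hinj]


lemma count_bit {k : ℕ} (nb : ℕ) (s : Fin k → Bool) (b : Bool) (m c : ℕ) :
    (Finset.univ.filter (fun i : Fin k => (i.val < m ∧ s i = b) ∧ c < nb - prefixCount s i)).card
      = min (Finset.univ.filter (fun i : Fin k => i.val < m ∧ s i = b)).card (nb - c) := by
  set T := Finset.univ.filter (fun i : Fin k => i.val < m ∧ s i = b) with hT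
  have h1 : Finset.univ.filter (fun i : Fin k => (i.val < m ∧ s i = b) ∧ c < nb - prefixCount s i)
      = T.filter (fun i => prefixCount s i < nb - c) := by
    rw [hT, Finset.filter_filter]
    apply Finset.filter_congr
    intro i _
    constructor
    · rintro ⟨h, h2⟩; exact ⟨h, by omega⟩
    · rintro ⟨h, h2⟩; exact ⟨h, by omega⟩
  rw [h1]
  have hinj : Set.InjOn (prefixCount s) (T.filter (fun i => prefixCount s i < nb - c)) := by
    intro i hi j hj hpc
    simp only [Finset.coe_filter, Set.mem_setOf_eq, hT, Finset.mem_filter, Finset.mem_univ,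
      true_and] at hi hj
    by_contra hne
    rcases lt_or_gt_of_ne (fun h : i = j => hne h) with h | h
    · exact absurd hpc (ne_of_lt (pc_lt_pc s h (hi.1.2.trans hj.1.2.symm)))
    · exact absurd hpc.symm (ne_of_lt (pc_lt_pc s h (hj.1.2.trans hi.1.2.symm)))
  have h2 : (T.filter (fun i => prefixCount s i < nb - c)).card
      = ((T.filter (fun i => prefixCount s i < nb - c)).image (prefixCount s)).card := by
    rw [Finset.card_image_of_injOn hinj]
  rw [h2]
  have h3 : (T.filter (fun i => prefixCount s i < nb - c)).image (prefixCount s)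
      = (T.image (prefixCount s)).filter (fun v => v < nb - c) := by
    rw [Finset.filter_image]
  rw [h3, hT, image_pc s b m, ← hT]
  have h4 : (Finset.range T.card).filter (fun v => v < nb - c)
      = Finset.range (min T.card (nb - c)) := by
    ext v
    simp only [Finset.mem_filter, Finset.mem_range, lt_min_iff]
  rw [h4, Finset.card_range]

lemma ncount_split (n₀ n₁ : ℕ) {k : ℕ} (s : Fin k → Bool) (m c : ℕ) :
    (Finset.univ.filter (fun i : Fin k => i.val < m ∧ c < den n₀ n₁ s i)).card
      = min (Finset.univ.filter (fun i : Fin k => i.val < m ∧ s i = false)).card (n₀ - c)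
        + min (Finset.univ.filter (fun i : Fin k => i.val < m ∧ s i = true)).card (n₁ - c) := by
  have hsplit := Finset.card_filter_add_card_filter_not
    (s := Finset.univ.filter (fun i : Fin k => i.val < m ∧ c < den n₀ n₁ s i))
    (fun i : Fin k => s i = true)
  rw [Finset.filter_filter, Finset.filter_filter] at hsplit
  have e1 : Finset.univ.filter (fun i : Fin k => (i.val < m ∧ c < den n₀ n₁ s i) ∧ s i = true)
      = Finset.univ.filter (fun i : Fin k => (i.val < m ∧ s i = true) ∧ c < n₁ - prefixCount s i) := by
    apply Finset.filter_congr
    intro i _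
    cases hsi : s i with
    | false => simp [den, hsi]
    | true => simp [den, hsi, and_assoc]
  have e0 : Finset.univ.filter (fun i : Fin k => (i.val < m ∧ c < den n₀ n₁ s i) ∧ ¬ s i = true)
      = Finset.univ.filter (fun i : Fin k => (i.val < m ∧ s i = false) ∧ c < n₀ - prefixCount s i) := by
    apply Finset.filter_congr
    intro i _
    cases hsi : s i with
    | false => simp [den, hsi, and_assoc]
    | true => simp [den, hsi]
  rw [e1, e0, count_bit n₁ s true m c, count_bit n₀ s false m c] at hsplit
  omega

lemma count_step {k : ℕ} (P : Fin k → Prop) [DecidablePred P] (m : ℕ) (hm : m < k) :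
    (Finset.univ.filter (fun i : Fin k => i.val < m + 1 ∧ P i)).card
      = (Finset.univ.filter (fun i : Fin k => i.val < m ∧ P i)).card
        + (if P ⟨m, hm⟩ then 1 else 0) := by
  by_cases hP : P ⟨m, hm⟩
  · rw [if_pos hP]
    have he : Finset.univ.filter (fun i : Fin k => i.val < m + 1 ∧ P i)
        = insert ⟨m, hm⟩ (Finset.univ.filter (fun i : Fin k => i.val < m ∧ P i)) := by
      ext i
      simp only [Finset.mem_insert, Finset.mem_filter, Finset.mem_univ, true_and]
      constructor
      · rintro ⟨h1, h2⟩
        rcases Nat.lt_succ_iff_lt_or_eq.mp h1 with h | h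
        · exact Or.inr ⟨h, h2⟩
        · exact Or.inl (Fin.ext h)
      · rintro (rfl | ⟨h1, h2⟩)
        · exact ⟨Nat.lt_succ_self m, hP⟩
        · exact ⟨Nat.lt_succ_of_lt h1, h2⟩
    rw [he, Finset.card_insert_of_notMem (by simp)]
  · rw [if_neg hP]
    have he : Finset.univ.filter (fun i : Fin k => i.val < m + 1 ∧ P i)
        = Finset.univ.filter (fun i : Fin k => i.val < m ∧ P i) := by
      apply Finset.filter_congr
      intro i _
      constructor
      · rintro ⟨h1, h2⟩
        rcases Nat.lt_succ_iff_lt_or_eq.mp h1 with h | h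
        · exact ⟨h, h2⟩
        · exact absurd h2 (by rw [show i = ⟨m, hm⟩ from Fin.ext h]; exact hP)
      · rintro ⟨h1, h2⟩; exact ⟨Nat.lt_succ_of_lt h1, h2⟩
    rw [he]
    omega

lemma min_ineq (n₀ n₁ a b m c : ℕ) (hab : a + b = m) (ha : a ≤ n₀) (hb : b ≤ n₁)
    (h01 : n₀ ≤ n₁) :
    min (min m n₀) (n₀ - c) + min (m - min m n₀) (n₁ - c)
      ≤ min a (n₀ - c) + min b (n₁ - c) := by
  omega



lemma level_diff {k : ℕ} (P Q : Fin k → Prop) [DecidablePred P] [DecidablePred Q] (ψv : ℕ → ℝ)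
    (heq : (Finset.univ.filter (fun i : Fin k => i.val < k ∧ Q i)).card
      = (Finset.univ.filter (fun i : Fin k => i.val < k ∧ P i)).card) :
    (∑ i : Fin k, if Q i then ψv i.val else 0) - (∑ i : Fin k, if P i then ψv i.val else 0)
      = ∑ m ∈ Finset.range k,
          (((Finset.univ.filter (fun i : Fin k => i.val < m + 1 ∧ Q i)).card : ℝ)
            - ((Finset.univ.filter (fun i : Fin k => i.val < m + 1 ∧ P i)).card : ℝ))
          * (ψv m - ψv (m + 1)) := by
  set NP : ℕ → ℝ := fun m => ((Finset.univ.filter (fun i : Fin k => i.val < m ∧ P i)).card : ℝ)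
    with hNP
  set NQ : ℕ → ℝ := fun m => ((Finset.univ.filter (fun i : Fin k => i.val < m ∧ Q i)).card : ℝ)
    with hNQ
  have stepP : ∀ i : Fin k, (if P i then ψv i.val else 0)
      = (NP (i.val + 1) - NP i.val) * ψv i.val := by
    intro i
    rw [hNP]
    simp only
    rw [count_step P i.val i.isLt]
    push_cast
    by_cases h : P i
    · rw [if_pos h, if_pos (by exact (by rwa [show (⟨i.val, i.isLt⟩ : Fin k) = i from Fin.ext rfl]))]
      ring
    · rw [if_neg h, if_neg (by rwa [show (⟨i.val, i.isLt⟩ : Fin k) = i from Fin.ext rfl])]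
      ring
  have stepQ : ∀ i : Fin k, (if Q i then ψv i.val else 0)
      = (NQ (i.val + 1) - NQ i.val) * ψv i.val := by
    intro i
    rw [hNQ]
    simp only
    rw [count_step Q i.val i.isLt]
    push_cast
    by_cases h : Q i
    · rw [if_pos h, if_pos (by rwa [show (⟨i.val, i.isLt⟩ : Fin k) = i from Fin.ext rfl])]
      ring
    · rw [if_neg h, if_neg (by rwa [show (⟨i.val, i.isLt⟩ : Fin k) = i from Fin.ext rfl])]
      ring
  rw [Finset.sum_congr rfl (fun i _ => stepP i), Finset.sum_congr rfl (fun i _ => stepQ i)]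
  rw [Fin.sum_univ_eq_sum_range (fun m => (NP (m + 1) - NP m) * ψv m) k]
  rw [Fin.sum_univ_eq_sum_range (fun m => (NQ (m + 1) - NQ m) * ψv m) k]
  have E0 : NQ 0 - NP 0 = 0 := by
    rw [hNP, hNQ]; simp
  have Ek : NQ k - NP k = 0 := by
    rw [hNP, hNQ]; simp only; rw [heq]; ring
  have := abel_id (fun m => NQ m - NP m) ψv k
  calc (∑ m ∈ Finset.range k, (NQ (m + 1) - NQ m) * ψv m)
        - ∑ m ∈ Finset.range k, (NP (m + 1) - NP m) * ψv m
      = ∑ m ∈ Finset.range k, ((NQ (m+1) - NP (m+1)) - (NQ m - NP m)) * ψv m := by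
        rw [← Finset.sum_sub_distrib]
        apply Finset.sum_congr rfl
        intro m _
        ring
    _ = (NQ k - NP k) * ψv k - (NQ 0 - NP 0) * ψv 0
        + ∑ m ∈ Finset.range k, (NQ (m+1) - NP (m+1)) * (ψv m - ψv (m+1)) := this
    _ = ∑ m ∈ Finset.range k, (NQ (m+1) - NP (m+1)) * (ψv m - ψv (m+1)) := by
        rw [E0, Ek]; ring

lemma level_le {k : ℕ} (P Q : Fin k → Prop) [DecidablePred P] [DecidablePred Q] (ψv : ℕ → ℝ)
    (hψ : ∀ m, m + 1 < k → ψv m ≤ ψv (m + 1))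
    (hpre : ∀ m, m ≤ k →
      (Finset.univ.filter (fun i : Fin k => i.val < m ∧ Q i)).card
        ≤ (Finset.univ.filter (fun i : Fin k => i.val < m ∧ P i)).card)
    (heq : (Finset.univ.filter (fun i : Fin k => i.val < k ∧ Q i)).card
      = (Finset.univ.filter (fun i : Fin k => i.val < k ∧ P i)).card) :
    (∑ i : Fin k, if P i then ψv i.val else 0) ≤ ∑ i : Fin k, if Q i then ψv i.val else 0 := by
  rw [← sub_nonneg, level_diff P Q ψv heq]
  apply Finset.sum_nonneg
  intro m hm
  rw [Finset.mem_range] at hm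
  rcases eq_or_lt_of_le (Nat.succ_le_of_lt hm) with h | h
  · rw [show m + 1 = k from h, heq]
    simp
  · have h1 : (((Finset.univ.filter (fun i : Fin k => i.val < m + 1 ∧ Q i)).card : ℝ)
        - ((Finset.univ.filter (fun i : Fin k => i.val < m + 1 ∧ P i)).card : ℝ)) ≤ 0 := by
      have := hpre (m + 1) (le_of_lt h)
      have := Nat.cast_le (α := ℝ) |>.mpr this
      linarith
    have h2 : ψv m - ψv (m + 1) ≤ 0 := by
      have := hψ m h
      linarith
    nlinarith

lemma level_lt {k : ℕ} (P Q : Fin k → Prop) [DecidablePred P] [DecidablePred Q] (ψv : ℕ → ℝ)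
    (hψ : ∀ m, m + 1 < k → ψv m ≤ ψv (m + 1))
    (hpre : ∀ m, m ≤ k →
      (Finset.univ.filter (fun i : Fin k => i.val < m ∧ Q i)).card
        ≤ (Finset.univ.filter (fun i : Fin k => i.val < m ∧ P i)).card)
    (heq : (Finset.univ.filter (fun i : Fin k => i.val < k ∧ Q i)).card
      = (Finset.univ.filter (fun i : Fin k => i.val < k ∧ P i)).card)
    (i₀ : ℕ) (hi₀ : i₀ + 1 < k)
    (hstrict : (Finset.univ.filter (fun i : Fin k => i.val < i₀ + 1 ∧ Q i)).card
      < (Finset.univ.filter (fun i : Fin k => i.val < i₀ + 1 ∧ P i)).card)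
    (hψs : ψv i₀ < ψv (i₀ + 1)) :
    (∑ i : Fin k, if P i then ψv i.val else 0) < ∑ i : Fin k, if Q i then ψv i.val else 0 := by
  rw [← sub_pos, level_diff P Q ψv heq]
  apply Finset.sum_pos'
  · intro m hm
    rw [Finset.mem_range] at hm
    rcases eq_or_lt_of_le (Nat.succ_le_of_lt hm) with h | h
    · rw [show m + 1 = k from h, heq]
      simp
    · have h1 : (((Finset.univ.filter (fun i : Fin k => i.val < m + 1 ∧ Q i)).card : ℝ)
          - ((Finset.univ.filter (fun i : Fin k => i.val < m + 1 ∧ P i)).card : ℝ)) ≤ 0 := by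
        have := hpre (m + 1) (le_of_lt h)
        have := Nat.cast_le (α := ℝ) |>.mpr this
        linarith
      have h2 : ψv m - ψv (m + 1) ≤ 0 := by
        have := hψ m h
        linarith
      nlinarith
  · refine ⟨i₀, Finset.mem_range.mpr (by omega), ?_⟩
    apply mul_pos_of_neg_of_neg
    · have := Nat.cast_lt (α := ℝ) |>.mpr hstrict
      linarith
    · linarith

lemma pc_lt_n {k : ℕ} (n₀ n₁ : ℕ) (s : Fin k → Bool)
    (hs₀ : (Finset.univ.filter (fun i => s i = false)).card = n₀)
    (hs₁ : (Finset.univ.filter (fun i => s i = true)).card = n₁) (i : Fin k) :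
    prefixCount s i < (if s i then n₁ else n₀) := by
  have h := pc_lt_card s i
  cases hsi : s i with
  | false =>
    rw [if_neg (by simp [hsi])]
    simp only [hsi] at h
    rwa [hs₀] at h
  | true =>
    rw [if_pos (by simp [hsi])]
    simp only [hsi] at h
    rwa [hs₁] at h

lemma binCost_eq {k : ℕ} (n₀ n₁ : ℕ) (h01 : n₀ ≤ n₁) (δ : ℝ) (x : Fin k → ℝ)
    (hδ : 0 ≤ δ) (hx : ∀ i, 0 ≤ x i) (s : Fin k → Bool)
    (hs₀ : (Finset.univ.filter (fun i => s i = false)).card = n₀)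
    (hs₁ : (Finset.univ.filter (fun i => s i = true)).card = n₁) :
    binCost n₀ n₁ δ x s
      = (∑ i : Fin k, Real.logb 2 (1 + δ * x i))
        + ∑ c ∈ Finset.Ico 1 n₁, ∑ i : Fin k,
            (if c < den n₀ n₁ s i then psi c (δ * x i) else 0) := by
  unfold binCost
  have key : ∀ i : Fin k,
      Real.logb 2 (1 + δ * (x i / ((if s i then (n₁ : ℝ) else (n₀ : ℝ)) - (prefixCount s i : ℝ))))
        = Real.logb 2 (1 + δ * x i)
          + ∑ c ∈ Finset.Ico 1 n₁, (if c < den n₀ n₁ s i then psi c (δ * x i) else 0) := by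
    intro i
    have hpc := pc_lt_n n₀ n₁ s hs₀ hs₁ i
    have hd1 : 1 ≤ den n₀ n₁ s i := by unfold den; omega
    have hd2 : den n₀ n₁ s i ≤ n₁ := by
      unfold den
      cases hsi : s i <;> simp [hsi] <;> omega
    have hreal : ((if s i then (n₁ : ℝ) else (n₀ : ℝ)) - (prefixCount s i : ℝ))
        = ((den n₀ n₁ s i : ℕ) : ℝ) := by
      unfold den
      cases hsi : s i with
      | false =>
        rw [if_neg (by simp [hsi]), if_neg (by simp [hsi])]
        rw [Nat.cast_sub (by rw [if_neg (by simp [hsi])] at hpc; omega)]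
      | true =>
        rw [if_pos (by simp [hsi]), if_pos (by simp [hsi])]
        rw [Nat.cast_sub (by rw [if_pos (by simp [hsi])] at hpc; omega)]
    rw [hreal]
    have harg : δ * (x i / ((den n₀ n₁ s i : ℕ) : ℝ)) = (δ * x i) / ((den n₀ n₁ s i : ℕ) : ℝ) := by
      ring
    rw [harg, logb_decomp (den n₀ n₁ s i) hd1 (δ * x i) (mul_nonneg hδ (hx i))]
    congr 1
    rw [← Finset.sum_filter]
    have : (Finset.Ico 1 n₁).filter (· < den n₀ n₁ s i)
        = Finset.Ico 1 (den n₀ n₁ s i) := by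
      rw [Finset.Ico_filter_lt 1 n₁ (den n₀ n₁ s i), min_eq_right hd2]
    rw [this]
  rw [Finset.sum_congr rfl (fun i _ => key i), Finset.sum_add_distrib, Finset.sum_comm]

end BinAux

open BinAux

/-- Uniqueness of the binary maximizer when `n₀ < n₁`: every sequence with composition
    `[n₀, n₁]` other than `n₀` zeros followed by `n₁` ones has strictly smaller cost. -/
theorem binCost_lt_sorted_of_ne (k n₀ n₁ : ℕ) (hk : 0 < k) (hcomp : n₀ + n₁ = k)
    (hlt : n₀ < n₁) (x : Fin k → ℝ) (δ : ℝ)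
    (hxdec : ∀ i j : Fin k, i < j → x j < x i) (hxnn : ∀ i, 0 ≤ x i)
    (hx1 : 0 < x ⟨0, hk⟩) (hδ : 0 < δ) (hδ1 : δ ≤ 1 / x ⟨0, hk⟩)
    (s : Fin k → Bool)
    (hs₀ : (Finset.univ.filter (fun i => s i = false)).card = n₀)
    (hs₁ : (Finset.univ.filter (fun i => s i = true)).card = n₁)
    (hne : s ≠ fun i : Fin k => decide (n₀ ≤ (i : ℕ))) :
    binCost n₀ n₁ δ x s <
      binCost n₀ n₁ δ x (fun i : Fin k => decide (n₀ ≤ (i : ℕ))) := by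
  classical
  set z : Fin k → Bool := fun i : Fin k => decide (n₀ ≤ (i : ℕ)) with hzdef
  have hn₀k : n₀ ≤ k := by omega
  have hzf : ∀ i : Fin k, z i = false ↔ i.val < n₀ := by
    intro i; rw [hzdef]; simp
  have hzt : ∀ i : Fin k, z i = true ↔ n₀ ≤ i.val := by
    intro i; rw [hzdef]; simp
  -- z composition
  have hz₀ : (Finset.univ.filter (fun i : Fin k => z i = false)).card = n₀ := by
    have e : (Finset.univ.filter (fun i : Fin k => z i = false))
        = Finset.univ.filter (fun i : Fin k => i.val < n₀) := by
      apply Finset.filter_congr; intro i _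
      rw [hzf i]
    rw [e, card_val_lt k n₀ hn₀k]
  have hz₁ : (Finset.univ.filter (fun i : Fin k => z i = true)).card = n₁ := by
    have hsp := Finset.card_filter_add_card_filter_not (s := Finset.univ)
      (fun i : Fin k => z i = false)
    have e : Finset.univ.filter (fun i : Fin k => ¬ z i = false)
        = Finset.univ.filter (fun i : Fin k => z i = true) := by
      apply Finset.filter_congr; intro i _; simp
    rw [e, hz₀, Finset.card_univ, Fintype.card_fin] at hsp
    omega
  -- prefix composition facts
  have hab : ∀ (t : Fin k → Bool) (m : ℕ), m ≤ k →
      (Finset.univ.filter (fun i : Fin k => i.val < m ∧ t i = false)).card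
        + (Finset.univ.filter (fun i : Fin k => i.val < m ∧ t i = true)).card = m := by
    intro t m hm
    have hsp := Finset.card_filter_add_card_filter_not
      (s := Finset.univ.filter (fun i : Fin k => i.val < m)) (fun i : Fin k => t i = false)
    rw [Finset.filter_filter, Finset.filter_filter, card_val_lt k m hm] at hsp
    have e : Finset.univ.filter (fun i : Fin k => i.val < m ∧ ¬ t i = false)
        = Finset.univ.filter (fun i : Fin k => i.val < m ∧ t i = true) := by
      apply Finset.filter_congr; intro i _; simp
    rw [e] at hsp
    exact hsp
  have hmono : ∀ (t : Fin k → Bool) (b : Bool) (m : ℕ),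
      (Finset.univ.filter (fun i : Fin k => i.val < m ∧ t i = b)).card
        ≤ (Finset.univ.filter (fun i : Fin k => t i = b)).card := by
    intro t b m
    apply Finset.card_le_card
    intro i hi
    simp only [Finset.mem_filter, Finset.mem_univ, true_and] at hi ⊢
    exact hi.2
  have hfull : ∀ (t : Fin k → Bool) (b : Bool),
      (Finset.univ.filter (fun i : Fin k => i.val < k ∧ t i = b))
        = Finset.univ.filter (fun i : Fin k => t i = b) := by
    intro t b
    apply Finset.filter_congr; intro i _
    simp [i.isLt]
  have hzzero : ∀ m : ℕ, m ≤ k →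
      (Finset.univ.filter (fun i : Fin k => i.val < m ∧ z i = false)).card = min m n₀ := by
    intro m hm
    have e : Finset.univ.filter (fun i : Fin k => i.val < m ∧ z i = false)
        = Finset.univ.filter (fun i : Fin k => i.val < min m n₀) := by
      apply Finset.filter_congr; intro i _
      rw [hzf i]
      omega
    rw [e, card_val_lt k (min m n₀) (le_trans (min_le_left _ _) hm)]
  -- prefix domination
  have hpre : ∀ (c m : ℕ), m ≤ k →
      (Finset.univ.filter (fun i : Fin k => i.val < m ∧ c < den n₀ n₁ z i)).card
        ≤ (Finset.univ.filter (fun i : Fin k => i.val < m ∧ c < den n₀ n₁ s i)).card := by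
    intro c m hm
    rw [ncount_split, ncount_split]
    have h1 := hab s m hm
    have h2 := hab z m hm
    have h3 := hzzero m hm
    have h4 := hmono s false m
    rw [hs₀] at h4
    have h5 := hmono s true m
    rw [hs₁] at h5
    omega
  have heqk : ∀ c : ℕ,
      (Finset.univ.filter (fun i : Fin k => i.val < k ∧ c < den n₀ n₁ z i)).card
        = (Finset.univ.filter (fun i : Fin k => i.val < k ∧ c < den n₀ n₁ s i)).card := by
    intro c
    rw [ncount_split, ncount_split, hfull s false, hfull s true, hfull z false, hfull z true,
      hs₀, hs₁, hz₀, hz₁]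
  -- minimal difference position
  have hex : ∃ i : Fin k, s i ≠ z i := by
    by_contra h
    push_neg at h
    exact hne (funext h)
  obtain ⟨w, hw⟩ := hex
  have hTne : (Finset.univ.filter (fun i : Fin k => s i ≠ z i)).Nonempty :=
    ⟨w, by simp [hw]⟩
  set i₀ := (Finset.univ.filter (fun i : Fin k => s i ≠ z i)).min' hTne with hi₀def
  have hi₀mem : s i₀ ≠ z i₀ := by
    have := Finset.min'_mem _ hTne
    simp only [Finset.mem_filter, Finset.mem_univ, true_and] at this
    exact this
  have hminpre : ∀ j : Fin k, j < i₀ → s j = z j := by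
    intro j hj
    by_contra hc
    have : i₀ ≤ j := Finset.min'_le _ j (by simp [hc])
    exact absurd hj (not_lt.mpr this)
  have hpceq : ∀ j : Fin k, j < i₀ → prefixCount s j = prefixCount z j := by
    intro j hj
    unfold prefixCount
    have e : Finset.univ.filter (fun j' : Fin k => j' < j ∧ s j' = s j)
        = Finset.univ.filter (fun j' : Fin k => j' < j ∧ z j' = z j) := by
      apply Finset.filter_congr; intro j' _
      constructor
      · rintro ⟨h1, h2⟩
        exact ⟨h1, by rw [← hminpre j' (lt_trans h1 hj), ← hminpre j hj]; exact h2⟩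
      · rintro ⟨h1, h2⟩
        exact ⟨h1, by rw [hminpre j' (lt_trans h1 hj), hminpre j hj]; exact h2⟩
    rw [e]
  have hdeneq : ∀ j : Fin k, j < i₀ → den n₀ n₁ s j = den n₀ n₁ z j := by
    intro j hj
    unfold den
    rw [hpceq j hj, hminpre j hj]
  have hN0 : ∀ c : ℕ,
      (Finset.univ.filter (fun i : Fin k => i.val < i₀.val ∧ c < den n₀ n₁ z i)).card
        = (Finset.univ.filter (fun i : Fin k => i.val < i₀.val ∧ c < den n₀ n₁ s i)).card := by
    intro c
    congr 1
    apply Finset.filter_congr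
    intro i _
    constructor
    · rintro ⟨h1, h2⟩
      exact ⟨h1, by rw [hdeneq i (Fin.lt_def.mpr h1)]; exact h2⟩
    · rintro ⟨h1, h2⟩
      exact ⟨h1, by rw [← hdeneq i (Fin.lt_def.mpr h1)]; exact h2⟩
  -- first difference is a one placed among the zeros
  have hzi₀ : z i₀ = false := by
    by_contra hzc
    have hzi : z i₀ = true := by
      cases hv : z i₀
      · exact absurd hv hzc
      · rfl
    have hsi : s i₀ = false := by
      cases hsv : s i₀
      · rfl
      · exact absurd (hsv.trans hzi.symm) hi₀mem
    have hn₀le : n₀ ≤ i₀.val := (hzt i₀).mp hzi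
    have hstep := count_step (fun i : Fin k => s i = false) i₀.val i₀.isLt
    have hprefzero : (Finset.univ.filter
        (fun i : Fin k => i.val < i₀.val ∧ s i = false)).card = n₀ := by
      have e : Finset.univ.filter (fun i : Fin k => i.val < i₀.val ∧ s i = false)
          = Finset.univ.filter (fun i : Fin k => i.val < i₀.val ∧ z i = false) := by
        apply Finset.filter_congr; intro i _
        constructor
        · rintro ⟨h1, h2⟩
          exact ⟨h1, by rw [← hminpre i (Fin.lt_def.mpr h1)]; exact h2⟩
        · rintro ⟨h1, h2⟩
          exact ⟨h1, by rw [hminpre i (Fin.lt_def.mpr h1)]; exact h2⟩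
      rw [e, hzzero i₀.val (le_of_lt i₀.isLt), min_eq_right hn₀le]
    have hle := hmono s false (i₀.val + 1)
    rw [hs₀] at hle
    rw [hprefzero, if_pos (show s ⟨i₀.val, i₀.isLt⟩ = false from hsi)] at hstep
    omega
  have hi₀lt : i₀.val < n₀ := (hzf i₀).mp hzi₀
  have hsi₀ : s i₀ = true := by
    cases hsv : s i₀
    · exact absurd (hsv.trans hzi₀.symm) hi₀mem
    · rfl
  have hpcz : prefixCount z i₀ = i₀.val := by
    unfold prefixCount
    have e : Finset.univ.filter (fun j : Fin k => j < i₀ ∧ z j = z i₀)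
        = Finset.univ.filter (fun j : Fin k => j.val < i₀.val) := by
      apply Finset.filter_congr; intro j _
      constructor
      · rintro ⟨h1, _⟩
        exact Fin.lt_def.mp h1
      · intro h1
        refine ⟨Fin.lt_def.mpr h1, ?_⟩
        rw [hzi₀]
        exact (hzf j).mpr (lt_trans h1 hi₀lt)
    rw [e, card_val_lt k i₀.val (le_of_lt i₀.isLt)]
  have hdenz : den n₀ n₁ z i₀ = n₀ - i₀.val := by
    unfold den
    rw [hpcz, if_neg (by simp [hzi₀])]
  have hdens : n₁ - i₀.val ≤ den n₀ n₁ s i₀ := by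
    have := pc_le s i₀
    unfold den
    rw [if_pos (by simp [hsi₀])]
    omega
  have hi₀k : i₀.val + 1 < k := by omega
  -- strict count drop at level n₀ - i₀
  have hstrict : (Finset.univ.filter
        (fun i : Fin k => i.val < i₀.val + 1 ∧ (n₀ - i₀.val) < den n₀ n₁ z i)).card
      < (Finset.univ.filter
        (fun i : Fin k => i.val < i₀.val + 1 ∧ (n₀ - i₀.val) < den n₀ n₁ s i)).card := by
    have hstep_s := count_step (fun i : Fin k => (n₀ - i₀.val) < den n₀ n₁ s i) i₀.val i₀.isLt
    have hstep_z := count_step (fun i : Fin k => (n₀ - i₀.val) < den n₀ n₁ z i) i₀.val i₀.isLt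
    rw [if_pos (show (n₀ - i₀.val) < den n₀ n₁ s i₀ by omega)] at hstep_s
    rw [if_neg (show ¬ ((n₀ - i₀.val) < den n₀ n₁ z i₀) by omega)] at hstep_z
    have := hN0 (n₀ - i₀.val)
    omega
  -- the ψ functions
  set Ψ : ℕ → ℕ → ℝ := fun c m => if h : m < k then psi c (δ * x ⟨m, h⟩) else 0 with hΨ
  have hΨval : ∀ (c : ℕ) (i : Fin k), Ψ c i.val = psi c (δ * x i) := by
    intro c i
    rw [hΨ]
    simp only
    rw [dif_pos i.isLt]
  have hψmono : ∀ c : ℕ, 1 ≤ c → ∀ m : ℕ, m + 1 < k → Ψ c m ≤ Ψ c (m + 1) := by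
    intro c hc m hm
    rw [hΨ]
    simp only
    rw [dif_pos (by omega : m < k), dif_pos hm]
    apply psi_anti_le c hc (mul_nonneg (le_of_lt hδ) (hxnn _))
    have hxlt := hxdec ⟨m, by omega⟩ ⟨m + 1, hm⟩ (Fin.lt_def.mpr (Nat.lt_succ_self m))
    exact le_of_lt (mul_lt_mul_of_pos_left hxlt hδ)
  have hψs : Ψ (n₀ - i₀.val) i₀.val < Ψ (n₀ - i₀.val) (i₀.val + 1) := by
    rw [hΨ]
    simp only
    rw [dif_pos (by omega : i₀.val < k), dif_pos hi₀k]
    apply psi_anti (n₀ - i₀.val) (by omega) (mul_nonneg (le_of_lt hδ) (hxnn _))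
    have hxlt := hxdec ⟨i₀.val, by omega⟩ ⟨i₀.val + 1, hi₀k⟩
      (Fin.lt_def.mpr (Nat.lt_succ_self i₀.val))
    exact mul_lt_mul_of_pos_left hxlt hδ
  have hconv : ∀ (t : Fin k → Bool) (c : ℕ),
      (∑ i : Fin k, if c < den n₀ n₁ t i then psi c (δ * x i) else 0)
        = ∑ i : Fin k, if c < den n₀ n₁ t i then Ψ c i.val else 0 := by
    intro t c
    apply Finset.sum_congr rfl
    intro i _
    rw [hΨval c i]
  -- assemble
  rw [binCost_eq n₀ n₁ (le_of_lt hlt) δ x (le_of_lt hδ) hxnn s hs₀ hs₁,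
    binCost_eq n₀ n₁ (le_of_lt hlt) δ x (le_of_lt hδ) hxnn z hz₀ hz₁]
  apply (add_lt_add_iff_left _).mpr
  apply Finset.sum_lt_sum
  · intro c hc
    rw [Finset.mem_Ico] at hc
    rw [hconv s c, hconv z c]
    exact level_le (fun i => c < den n₀ n₁ s i) (fun i => c < den n₀ n₁ z i) (Ψ c)
      (hψmono c hc.1) (fun m hm => hpre c m hm) (heqk c)
  · refine ⟨n₀ - i₀.val, Finset.mem_Ico.mpr ⟨by omega, by omega⟩, ?_⟩
    rw [hconv s (n₀ - i₀.val), hconv z (n₀ - i₀.val)]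
    exact level_lt (fun i => (n₀ - i₀.val) < den n₀ n₁ s i)
      (fun i => (n₀ - i₀.val) < den n₀ n₁ z i) (Ψ (n₀ - i₀.val))
      (hψmono (n₀ - i₀.val) (by omega)) (fun m hm => hpre (n₀ - i₀.val) m hm)
      (heqk (n₀ - i₀.val)) i₀.val hi₀k hstrict hψs
end

section
/- Let A be a finite alphabet, P_A a probability distribution on A with P_A(a) > 0 for all a ∈ A, and γ = [n_a]_{a∈A} a composition with Σ_a n_a = n ≥ 1; let Q(a) = n_a / n be its n-type. Let C ⊆ T_γ be a nonempty codebook with |C| = 2^k for a natural number k, and let P_{Ã} be the uniform distribution on C. Then (1/n) D(P_{Ã} ‖ P_A^n) = H(Q) − k/n + D(Q ‖ P_A), where D(P_{Ã} ‖ P_A^n) = Σ_{c∈C} (1/|C|) log₂( (1/|C|) / Π_{i=1}^n P_A(c_i) ), H(Q) = −Σ_{a: Q(a)>0} Q(a) log₂ Q(a), and D(Q ‖ P_A) = Σ_{a: Q(a)>0} Q(a) log₂(Q(a)/P_A(a)). -/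
/-- The type class `T_γ` of sequences of length `n` with composition `γ`. -/
def typeClass {A : Type*} [Fintype A] [DecidableEq A] (n : ℕ) (γ : A → ℕ) :
    Finset (Fin n → A) :=
  Finset.univ.filter (fun c => ∀ a, (Finset.univ.filter (fun i => c i = a)).card = γ a)

/-!
Every codeword of a constant-composition code has the same probability `∏ₐ P_A(a)^{n_a}`
under `P_A^n`, so the divergence is the single logarithm `-k - ∑ₐ n_a log₂ P_A(a)`.
On the other side, `-H(Q) + D(Q ‖ P_A)` is the cross-entropy `-∑ₐ Q(a) log₂ P_A(a)`,
which is the same quantity divided by `n`.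
-/

open Finset Real

section TypeClass

variable {A : Type*} [Fintype A] [DecidableEq A] {n : ℕ} {γ : A → ℕ}

theorem prod_comp_eq_prod_pow_of_mem_typeClass {M : Type*} [CommMonoid M] (f : A → M)
    {c : Fin n → A} (hc : c ∈ typeClass n γ) : ∏ i, f (c i) = ∏ a, f a ^ γ a := by
  simp only [typeClass, mem_filter, mem_univ, true_and] at hc
  rw [← prod_fiberwise' univ c f]
  exact prod_congr rfl fun a _ => by rw [prod_const, hc a]

theorem logb_div_prod_comp_of_mem_typeClass {b x : ℝ} (hx : x ≠ 0) {p : A → ℝ}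
    (hp : ∀ a, p a ≠ 0) {c : Fin n → A} (hc : c ∈ typeClass n γ) :
    logb b (x / ∏ i, p (c i)) = logb b x - ∑ a, γ a * logb b (p a) := by
  have hpow : ∀ a ∈ univ, p a ^ γ a ≠ 0 := fun a _ => pow_ne_zero _ (hp a)
  rw [prod_comp_eq_prod_pow_of_mem_typeClass p hc, logb_div hx (prod_ne_zero_iff.2 hpow),
    logb_prod _ _ hpow]
  simp only [logb_pow]

end TypeClass

theorem mul_logb_div_eq_sub {b q p : ℝ} (hp : p ≠ 0) :
    q * logb b (q / p) = q * logb b q - q * logb b p := by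
  rcases eq_or_ne q 0 with rfl | hq
  · simp
  · rw [logb_div hq hp, mul_sub]

theorem neg_sum_mul_logb_add_sum_mul_logb_div {ι : Type*} (s : Finset ι) {b : ℝ}
    (q p : ι → ℝ) (hp : ∀ i ∈ s, p i ≠ 0) :
    -∑ i ∈ s, q i * logb b (q i) + ∑ i ∈ s, q i * logb b (q i / p i) =
      -∑ i ∈ s, q i * logb b (p i) := by
  rw [sum_congr rfl fun i hi => mul_logb_div_eq_sub (hp i hi), sum_sub_distrib]
  ring

theorem ccdm_divergence_decomposition_general {A : Type*} [Fintype A] [DecidableEq A]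
    (PA : A → ℝ) (hPA : ∀ a, 0 < PA a)
    (n : ℕ) (γ : A → ℕ)
    (k : ℕ) (C : Finset (Fin n → A)) (hC : C ⊆ typeClass n γ)
    (hCcard : C.card = 2 ^ k) :
    (1 / (n : ℝ)) *
        (∑ c ∈ C, (1 / (C.card : ℝ)) *
          Real.logb 2 ((1 / (C.card : ℝ)) / ∏ i : Fin n, PA (c i))) =
      (- ∑ a ∈ Finset.univ.filter (fun a => 0 < γ a),
          ((γ a : ℝ) / n) * Real.logb 2 ((γ a : ℝ) / n)) -
        (k : ℝ) / n +
        ∑ a ∈ Finset.univ.filter (fun a => 0 < γ a),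
          ((γ a : ℝ) / n) * Real.logb 2 (((γ a : ℝ) / n) / PA a) := by
  have hcard : (C.card : ℝ) = 2 ^ k := by exact_mod_cast hCcard
  have hcard0 : (C.card : ℝ) ≠ 0 := by rw [hcard]; positivity
  set L := ∑ a, (γ a : ℝ) * logb 2 (PA a)
  have hcodeword : ∀ c ∈ C, logb 2 ((1 / (C.card : ℝ)) / ∏ i, PA (c i)) = -k - L :=
    fun c hc => by
      rw [logb_div_prod_comp_of_mem_typeClass (one_div_ne_zero hcard0) (fun a => (hPA a).ne')
        (hC hc), hcard, one_div, logb_inv, logb_pow, logb_self_eq_one one_lt_two, mul_one]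
  have hcross :
      ∑ a ∈ univ.filter (fun a => 0 < γ a), ((γ a : ℝ) / n) * logb 2 (PA a) = L / n := by
    rw [sum_filter_of_ne fun a _ h => Nat.pos_of_ne_zero fun h0 => h (by simp [h0]), sum_div]
    exact sum_congr rfl fun a _ => by ring
  have hentropy := neg_sum_mul_logb_add_sum_mul_logb_div (univ.filter (fun a => 0 < γ a))
    (b := 2) (fun a => (γ a : ℝ) / n) PA fun a _ => (hPA a).ne'
  have hunif : (C.card : ℝ) * (1 / C.card) = 1 := mul_one_div_cancel hcard0
  rw [sum_congr rfl fun c hc => by rw [hcodeword c hc], sum_const, nsmul_eq_mul]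
  linear_combination (1 / (n : ℝ) * (-k - L)) * hunif - hentropy + hcross

/-- For a codebook `C ⊆ T_γ` with `|C| = 2^k`, carrying the uniform distribution,
    the normalized divergence decomposes as
    `(1/n) D(P_Ã ‖ P_A^n) = H(Q) − k/n + D(Q ‖ P_A)`, where `Q(a) = n_a/n`
    is the `n`-type of the composition `γ`. -/
theorem ccdm_divergence_decomposition {A : Type*} [Fintype A] [DecidableEq A]
    (PA : A → ℝ) (hPA : ∀ a, 0 < PA a) (hPAsum : ∑ a, PA a = 1)
    (n : ℕ) (hn : 1 ≤ n) (γ : A → ℕ) (hγsum : ∑ a, γ a = n)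
    (k : ℕ) (C : Finset (Fin n → A)) (hC : C ⊆ typeClass n γ)
    (hCne : C.Nonempty) (hCcard : C.card = 2 ^ k) :
    (1 / (n : ℝ)) *
        (∑ c ∈ C, (1 / (C.card : ℝ)) *
          Real.logb 2 ((1 / (C.card : ℝ)) / ∏ i : Fin n, PA (c i))) =
      (- ∑ a ∈ Finset.univ.filter (fun a => 0 < γ a),
          ((γ a : ℝ) / n) * Real.logb 2 ((γ a : ℝ) / n)) -
        (k : ℝ) / n +
        ∑ a ∈ Finset.univ.filter (fun a => 0 < γ a),
          ((γ a : ℝ) / n) * Real.logb 2 (((γ a : ℝ) / n) / PA a) :=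
  ccdm_divergence_decomposition_general PA hPA n γ k C hC hCcard
end

section
/- Let ŷ, F₁, F₂, Θ be natural numbers with 1 ≤ Θ ≤ ŷ and F₁ < F₂. Then ⌊ŷ·F₂/Θ + 1/2⌋ − ⌊ŷ·F₁/Θ + 1/2⌋ ≥ 1. -/
theorem Int.floor_add_one_le_floor_of_add_one_le {α : Type*} [Ring α] [LinearOrder α]
    [IsStrictOrderedRing α] [FloorRing α] {x y : α} (h : x + 1 ≤ y) : ⌊x⌋ + 1 ≤ ⌊y⌋ := by
  simpa only [Int.floor_add_one] using Int.floor_mono h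

theorem mul_div_add_one_le_mul_div {K : Type*} [Field K] [LinearOrder K] [IsStrictOrderedRing K]
    {y a b t : K} (ht : 0 < t) (hty : t ≤ y) (hab : a + 1 ≤ b) : y * a / t + 1 ≤ y * b / t := by
  rw [div_add_one ht.ne', div_le_div_iff_of_pos_right ht]
  nlinarith [mul_le_mul_of_nonneg_left hab (ht.le.trans hty)]

/-- Nonemptiness of finite-precision arithmetic-coding subintervals:
    if `1 ≤ Θ ≤ ŷ` and `F₁ < F₂`, the rounded boundary values differ by at least `1`. -/
theorem one_le_floor_diff (yhat F₁ F₂ Θ : ℕ) (hΘ : 1 ≤ Θ) (hΘy : Θ ≤ yhat) (hF : F₁ < F₂) :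
    1 ≤ (⌊(yhat : ℝ) * (F₂ : ℝ) / (Θ : ℝ) + 1 / 2⌋ : ℤ) -
        (⌊(yhat : ℝ) * (F₁ : ℝ) / (Θ : ℝ) + 1 / 2⌋ : ℤ) := by
  have hgap : (yhat : ℝ) * F₁ / Θ + 1 ≤ yhat * F₂ / Θ :=
    mul_div_add_one_le_mul_div (by exact_mod_cast hΘ) (by exact_mod_cast hΘy)
      (by exact_mod_cast hF)
  have hfloor := Int.floor_add_one_le_floor_of_add_one_le
    (x := (yhat : ℝ) * F₁ / Θ + 1 / 2) (y := yhat * F₂ / Θ + 1 / 2) (by linarith)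
  omega
end

section
/- Let A be a finite linearly ordered alphabet and n ≥ 1. For each i with 0 ≤ i < n and each prefix s ∈ A^i, let P(·|s) be a probability mass function on A (nonnegative values summing to 1), and let F(a|s) = Σ_{b ≤ a} P(b|s) with F(a₀|s) = 0 for notation (a₀ below the smallest symbol). Define recursively x(λ) = 0, y(λ) = 1, and for a prefix s and symbol a: x(sa) = x(s) + y(s)·F(a⁻|s) and y(sa) = y(s)·P(a|s), where a⁻ is the predecessor of a (with F(a⁻|s) = 0 if a is the smallest symbol). Then for every c ∈ Aⁿ: (i) y(c) = Π_{i=0}^{n−1} P(c_{i+1}|c₁^i); (ii) x(c) = Σ_{c' ∈ Aⁿ, c' <_lex c} y(c'); and (iii) the intervals I(c) = [x(c), x(c) + y(c)) for c ∈ Aⁿ are pairwise disjoint and their union is [0, 1). -/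
/-!
Write a word of length `k + 1` as `u b` with `|u| = k`. The recursion for `y` and
`∑_b P(b|u) = 1` give `∑_b y(u b) = y(u)`, so the widths of the words of each length are
nonnegative and sum to `1`. Since the lexicographic order compares the prefixes first, the words
below `u a` are the `u' b` with `u' < u` together with the `u b` with `b < a`; summing their
widths turns the recursion for `x` into `x(c) = ∑_{c' < c} y(c')`. Finally, nonnegative weights
summing to `1` on a finite linear order cut `[0, 1)` into the consecutive intervals
`[∑_{c' < c} y(c'), ∑_{c' ≤ c} y(c'))`: adding a new largest element appends its interval at the
right end.
-/

open Finset

theorem List.append_lt_append_iff_of_length_eq {α : Type*} [LT α] {u t v w : List α}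
    (h : u.length = t.length) : u ++ v < t ++ w ↔ u < t ∨ u = t ∧ v < w := by
  induction u generalizing t with
  | nil =>
    obtain rfl : t = [] := List.length_eq_zero_iff.mp h.symm
    simp
  | cons a u ih =>
    cases t with
    | nil => simp at h
    | cons b t =>
      simp only [List.cons_append, List.cons_lt_cons_iff, List.cons.injEq, ih (Nat.succ.inj h)]
      tauto

theorem List.ofFn_snoc {α : Type*} {k : ℕ} (u : Fin k → α) (b : α) :
    List.ofFn (Fin.snoc u b) = List.ofFn u ++ [b] := by
  rw [List.ofFn_succ_last]
  simp

theorem List.ofFn_snoc_lt_ofFn_snoc_iff {α : Type*} [LT α] {k : ℕ} {u v : Fin k → α}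
    {a b : α} :
    List.ofFn (Fin.snoc v b) < List.ofFn (Fin.snoc u a) ↔
      List.ofFn v < List.ofFn u ∨ v = u ∧ b < a := by
  rw [List.ofFn_snoc, List.ofFn_snoc, List.append_lt_append_iff_of_length_eq (by simp),
    List.ofFn_inj]
  simp [List.cons_lt_cons_iff]

theorem Fin.sum_pi_snoc {α M : Type*} [Fintype α] [AddCommMonoid M] {k : ℕ}
    (f : (Fin (k + 1) → α) → M) :
    ∑ c, f c = ∑ u : Fin k → α, ∑ b, f (Fin.snoc u b) := by
  rw [← (Fin.snocEquiv fun _ => α).sum_comp, Fintype.sum_prod_type, Finset.sum_comm]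
  rfl

section Cumulative

variable {ι : Type*} [LinearOrder ι] (s : Finset ι) (w : ι → ℝ)

theorem sum_filter_lt_add_le_sum_filter_lt (hw : ∀ i ∈ s, 0 ≤ w i) {i j : ι} (hi : i ∈ s)
    (hij : i < j) : ∑ k ∈ s with k < i, w k + w i ≤ ∑ k ∈ s with k < j, w k := by
  rw [add_comm, ← sum_insert (by simp)]
  refine sum_le_sum_of_subset_of_nonneg ?_ fun k hk _ => hw k (mem_filter.mp hk).1
  intro k hk
  simp only [mem_insert, mem_filter] at hk ⊢
  rcases hk with rfl | ⟨hk, hki⟩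
  exacts [⟨hi, hij⟩, ⟨hk, hki.trans hij⟩]

theorem pairwiseDisjoint_Ico_sum_filter_lt (hw : ∀ i ∈ s, 0 ≤ w i) :
    (s : Set ι).PairwiseDisjoint
      fun i => Set.Ico (∑ k ∈ s with k < i, w k) (∑ k ∈ s with k < i, w k + w i) := by
  intro i hi j hj hij
  rcases hij.lt_or_gt with h | h
  · exact Set.Ico_disjoint_Ico_same.mono_left
      (Set.Ico_subset_Ico_right (sum_filter_lt_add_le_sum_filter_lt s w hw hi h))
  · exact (Set.Ico_disjoint_Ico_same.mono_left
      (Set.Ico_subset_Ico_right (sum_filter_lt_add_le_sum_filter_lt s w hw hj h))).symm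

theorem iUnion_Ico_sum_filter_lt (hw : ∀ i ∈ s, 0 ≤ w i) :
    ⋃ i ∈ s, Set.Ico (∑ k ∈ s with k < i, w k) (∑ k ∈ s with k < i, w k + w i) =
      Set.Ico 0 (∑ i ∈ s, w i) := by
  induction s using Finset.induction_on_max with
  | empty => simp
  | insert a t hlt ih =>
    have ha : a ∉ t := fun h => lt_irrefl a (hlt a h)
    have hw' : ∀ i ∈ t, 0 ≤ w i := fun i hi => hw i (mem_insert_of_mem hi)
    have below_a : ∀ i ∈ t, {k ∈ insert a t | k < i} = {k ∈ t | k < i} := fun i hi => by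
      rw [filter_insert, if_neg (hlt i hi).not_gt]
    have at_a : {k ∈ insert a t | k < a} = t := by
      rw [filter_insert, if_neg (lt_irrefl a), filter_true_of_mem hlt]
    rw [set_biUnion_insert, at_a, sum_insert ha,
      Set.iUnion₂_congr fun i hi => by rw [below_a i hi], ih hw', Set.union_comm,
      Set.Ico_union_Ico_eq_Ico (sum_nonneg hw')
        (le_add_of_nonneg_right (hw a (mem_insert_self a t))), add_comm]

end Cumulative

section Recursion

variable {A : Type*} {n : ℕ} {P : List A → A → ℝ} {x y : List A → ℝ}

theorem y_ofFn_eq_prod (hy0 : y [] = 1)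
    (hystep : ∀ s : List A, s.length < n → ∀ a, y (s ++ [a]) = y s * P s a) :
    ∀ {k : ℕ}, k ≤ n → ∀ c : Fin k → A,
      y (List.ofFn c) = ∏ i : Fin k, P ((List.ofFn c).take i) (c i)
  | 0, _, c => by simp [hy0]
  | k + 1, hk, c => by
    cases c using Fin.snocCases with
    | snoc u b =>
      rw [List.ofFn_snoc, hystep _ (by simpa using hk), Fin.prod_univ_castSucc,
        y_ofFn_eq_prod hy0 hystep (by omega) u]
      simp [List.take_append_of_le_length, Fin.is_le']

theorem y_ofFn_nonneg (hy0 : y [] = 1) (hP : ∀ s : List A, s.length < n → ∀ a, 0 ≤ P s a)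
    (hystep : ∀ s : List A, s.length < n → ∀ a, y (s ++ [a]) = y s * P s a)
    {k : ℕ} (hk : k ≤ n) (c : Fin k → A) : 0 ≤ y (List.ofFn c) := by
  rw [y_ofFn_eq_prod hy0 hystep hk]
  exact prod_nonneg fun i _ => hP _ (by simp; omega) _

theorem sum_y_ofFn_snoc [Fintype A] (hP : ∀ s : List A, s.length < n → ∑ a, P s a = 1)
    (hystep : ∀ s : List A, s.length < n → ∀ a, y (s ++ [a]) = y s * P s a)
    {k : ℕ} (hk : k < n) (u : Fin k → A) :
    ∑ b, y (List.ofFn (Fin.snoc u b)) = y (List.ofFn u) := by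
  have hlen : (List.ofFn u).length < n := by simpa using hk
  simp_rw [List.ofFn_snoc, hystep _ hlen, ← mul_sum, hP _ hlen, mul_one]

theorem sum_y_ofFn [Fintype A] (hy0 : y [] = 1)
    (hP : ∀ s : List A, s.length < n → ∑ a, P s a = 1)
    (hystep : ∀ s : List A, s.length < n → ∀ a, y (s ++ [a]) = y s * P s a) :
    ∀ {k : ℕ}, k ≤ n → ∑ c : Fin k → A, y (List.ofFn c) = 1
  | 0, _ => by simp [hy0]
  | k + 1, hk => by
    rw [Fin.sum_pi_snoc]
    simp_rw [sum_y_ofFn_snoc hP hystep hk]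
    exact sum_y_ofFn hy0 hP hystep (by omega)

theorem x_ofFn_eq_sum [Fintype A] [LinearOrder A] (hx0 : x [] = 0)
    (hP : ∀ s : List A, s.length < n → ∑ a, P s a = 1)
    (hxstep : ∀ s : List A, s.length < n → ∀ a : A,
      x (s ++ [a]) = x s + y s * ∑ b ∈ univ with b < a, P s b)
    (hystep : ∀ s : List A, s.length < n → ∀ a, y (s ++ [a]) = y s * P s a) :
    ∀ {k : ℕ}, k ≤ n → ∀ c : Fin k → A,
      x (List.ofFn c) =
        ∑ c' ∈ (univ : Finset (Fin k → A)) with List.ofFn c' < List.ofFn c, y (List.ofFn c')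
  | 0, _, c => by simp [hx0]
  | k + 1, hk, c => by
    cases c using Fin.snocCases with
    | snoc u a =>
      have hlen : (List.ofFn u).length < n := by simpa using hk
      have hrow : ∀ v : Fin k → A,
          ∑ b ∈ univ with List.ofFn (Fin.snoc v b) < List.ofFn (Fin.snoc u a),
              y (List.ofFn (Fin.snoc v b)) =
            (if List.ofFn v < List.ofFn u then y (List.ofFn v) else 0) +
              if v = u then ∑ b ∈ univ with b < a, y (List.ofFn (Fin.snoc u b)) else 0 := by
        intro v
        simp_rw [List.ofFn_snoc_lt_ofFn_snoc_iff]
        by_cases hvu : List.ofFn v < List.ofFn u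
        · have hne : v ≠ u := by rintro rfl; exact lt_irrefl _ hvu
          rw [if_pos hvu, if_neg hne, add_zero, filter_true_of_mem fun b _ => Or.inl hvu,
            sum_y_ofFn_snoc hP hystep hk]
        · by_cases hv : v = u
          · subst hv
            simp only [hvu, false_or, true_and, if_false, if_true, zero_add]
          · simp [hvu, hv]
      calc x (List.ofFn (Fin.snoc u a))
          = x (List.ofFn u) + ∑ b ∈ univ with b < a, y (List.ofFn (Fin.snoc u b)) := by
            simp_rw [List.ofFn_snoc, hxstep _ hlen, mul_sum, hystep _ hlen]
        _ = ∑ v : Fin k → A,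
              ∑ b ∈ univ with List.ofFn (Fin.snoc v b) < List.ofFn (Fin.snoc u a),
                y (List.ofFn (Fin.snoc v b)) := by
            rw [x_ofFn_eq_sum hx0 hP hxstep hystep (by omega) u]
            simp_rw [hrow, sum_add_distrib, sum_ite_eq', if_pos (mem_univ u), ← sum_filter]
        _ = _ := by
            rw [sum_filter, Fin.sum_pi_snoc]
            simp_rw [sum_filter]

end Recursion

theorem ac_intervals_partition_general {A : Type*} [Fintype A] [LinearOrder A]
    (n : ℕ)
    (P : List A → A → ℝ)
    (hP : ∀ s : List A, s.length < n → (∀ a, 0 ≤ P s a) ∧ ∑ a, P s a = 1)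
    (x y : List A → ℝ) (hx0 : x [] = 0) (hy0 : y [] = 1)
    (hxstep : ∀ s : List A, s.length < n → ∀ a : A,
      x (s ++ [a]) = x s + y s * ∑ b ∈ Finset.univ.filter (fun b => b < a), P s b)
    (hystep : ∀ s : List A, s.length < n → ∀ a : A,
      y (s ++ [a]) = y s * P s a) :
    (∀ c : Fin n → A,
        y (List.ofFn c) = ∏ i : Fin n, P ((List.ofFn c).take i) (c i)) ∧
    (∀ c : Fin n → A,
        x (List.ofFn c) =
          ∑ c' ∈ Finset.univ.filter
              (fun c' : Fin n → A => List.ofFn c' < List.ofFn c),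
            y (List.ofFn c')) ∧
    (∀ c₁ c₂ : Fin n → A, c₁ ≠ c₂ →
        Disjoint
          (Set.Ico (x (List.ofFn c₁)) (x (List.ofFn c₁) + y (List.ofFn c₁)))
          (Set.Ico (x (List.ofFn c₂)) (x (List.ofFn c₂) + y (List.ofFn c₂)))) ∧
    (⋃ c : Fin n → A,
        Set.Ico (x (List.ofFn c)) (x (List.ofFn c) + y (List.ofFn c))) =
      Set.Ico (0 : ℝ) 1 := by
  have hP_nonneg := fun s hs => (hP s hs).1
  have hP_sum := fun s hs => (hP s hs).2
  have hx := x_ofFn_eq_sum hx0 hP_sum hxstep hystep le_rfl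
  let words : Finset (List A) := (univ : Finset (Fin n → A)).image List.ofFn
  have hx_words (c : Fin n → A) : x (List.ofFn c) = ∑ l ∈ words with l < List.ofFn c, y l := by
    rw [hx, filter_image, sum_image fun _ _ _ _ h => List.ofFn_injective h]
  have hy_nonneg : ∀ l ∈ words, 0 ≤ y l := by
    simpa [words] using y_ofFn_nonneg hy0 hP_nonneg hystep le_rfl
  have hy_sum : ∑ l ∈ words, y l = 1 := by
    rw [sum_image fun _ _ _ _ h => List.ofFn_injective h]
    exact sum_y_ofFn hy0 hP_sum hystep le_rfl
  refine ⟨y_ofFn_eq_prod hy0 hystep le_rfl, hx, fun c₁ c₂ hne => ?_, ?_⟩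
  -- `convert` and `congr!` only reconcile the decidability of `<` on `List A`: core's
  -- `List.decidableLT` versus the one inside Mathlib's `LinearOrder (List A)`.
  · rw [hx_words, hx_words]
    convert pairwiseDisjoint_Ico_sum_filter_lt words y hy_nonneg
      (mem_image_of_mem _ (mem_univ c₁)) (mem_image_of_mem _ (mem_univ c₂))
      (List.ofFn_injective.ne hne)
  · rw [← hy_sum, ← iUnion_Ico_sum_filter_lt words y hy_nonneg]
    simp only [words, hx_words, set_biUnion_finset_image, mem_univ, Set.iUnion_true]
    congr!

/-- Infinite-precision interval computation of an arithmetic-coding based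
    distribution matcher: the recursion `x(λ)=0`, `y(λ)=1`,
    `x(sa) = x(s) + y(s)·F(a⁻|s)`, `y(sa) = y(s)·P(a|s)` yields, for every
    codeword `c ∈ Aⁿ`: (i) `y(c) = Π P(c_{i+1}|c₁^i)`;
    (ii) `x(c) = Σ_{c' <_lex c} y(c')`; (iii) the intervals
    `[x(c), x(c)+y(c))` partition `[0,1)`. -/
theorem ac_intervals_partition {A : Type*} [Fintype A] [LinearOrder A]
    (n : ℕ) (hn : 1 ≤ n)
    (P : List A → A → ℝ)
    (hP : ∀ s : List A, s.length < n → (∀ a, 0 ≤ P s a) ∧ ∑ a, P s a = 1)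
    (x y : List A → ℝ) (hx0 : x [] = 0) (hy0 : y [] = 1)
    (hxstep : ∀ s : List A, s.length < n → ∀ a : A,
      x (s ++ [a]) = x s + y s * ∑ b ∈ Finset.univ.filter (fun b => b < a), P s b)
    (hystep : ∀ s : List A, s.length < n → ∀ a : A,
      y (s ++ [a]) = y s * P s a) :
    (∀ c : Fin n → A,
        y (List.ofFn c) = ∏ i : Fin n, P ((List.ofFn c).take i) (c i)) ∧
    (∀ c : Fin n → A,
        x (List.ofFn c) =
          ∑ c' ∈ Finset.univ.filter
              (fun c' : Fin n → A => List.ofFn c' < List.ofFn c),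
            y (List.ofFn c')) ∧
    (∀ c₁ c₂ : Fin n → A, c₁ ≠ c₂ →
        Disjoint
          (Set.Ico (x (List.ofFn c₁)) (x (List.ofFn c₁) + y (List.ofFn c₁)))
          (Set.Ico (x (List.ofFn c₂)) (x (List.ofFn c₂) + y (List.ofFn c₂)))) ∧
    (⋃ c : Fin n → A,
        Set.Ico (x (List.ofFn c)) (x (List.ofFn c) + y (List.ofFn c))) =
      Set.Ico (0 : ℝ) 1 :=
  ac_intervals_partition_general n P hP x y hx0 hy0 hxstep hystep
end

section
/- Let A be a finite linearly ordered alphabet, n ≥ 1, w a natural number, and ε ≥ 0. For each i with 0 ≤ i < n and each prefix s ∈ A^i, let P(·|s) be a probability mass function on A, let Θ(s) ≥ 1 be an integer with 2^w ≥ Θ(s), and let P̂(·|s) be nonnegative integers with |P̂(a|s)/Θ(s) − P(a|s)| ≤ ε for all a. Suppose ŷ and L assign to each prefix a natural number such that ŷ(λ) = 2^w, L(λ) = 0, and for every prefix s with 2^w ≤ ŷ(s) and every symbol a there is an integer v ≥ 0 with: ŷ(sa) = ( ⌊ŷ(s)·F̂(a|s)/Θ(s) + 1/2⌋ − ⌊ŷ(s)·F̂(a⁻|s)/Θ(s)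 + 1/2⌋ )·2^v, L(sa) = L(s) + v, and 2^w ≤ ŷ(sa) < 2^{w+1}, where F̂(a|s) = Σ_{b ≤ a} P̂(b|s) and F̂(a⁻|s) is the corresponding sum over predecessors of a (zero if a is smallest). Define y(s) = ŷ(s)/2^{L(s)+w}. Then for every c ∈ Aⁿ with P(c_{i+1}|c₁^i) > 0 for all 0 ≤ i < n: y(c) ≤ Π_{i=0}^{n−1} P(c_{i+1}|c₁^i) · Π_{i=0}^{n−1} ( 1 + (ε + 2^{−w}) / P(c_{i+1}|c₁^i) ). -/
/-- Finite-precision arithmetic implementation of an AC based distribution matcher: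
    with integer frequency-count model `P̂` (scaling `Θ ≤ 2^w`, model error `≤ ε`),
    mantissas `ŷ` (with `2^w ≤ ŷ < 2^{w+1}` maintained by shifts `2^v`) and exponents
    `L`, the interval width `y(c) = ŷ(c)/2^{L(c)+w}` of every codeword `c` with positive
    model probabilities satisfies
    `y(c) ≤ Π P(c_{i+1}|c₁^i) · Π (1 + (ε + 2^{−w})/P(c_{i+1}|c₁^i))`. -/
theorem fpa_interval_width_le {A : Type*} [Fintype A] [LinearOrder A]
    (n : ℕ) (hn : 1 ≤ n) (w : ℕ) (ε : ℝ) (hε : 0 ≤ ε)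
    (P : List A → A → ℝ)
    (hP : ∀ s : List A, s.length < n → (∀ a, 0 ≤ P s a) ∧ ∑ a, P s a = 1)
    (Θ : List A → ℕ)
    (hΘ : ∀ s : List A, s.length < n → 1 ≤ Θ s ∧ Θ s ≤ 2 ^ w)
    (Phat : List A → A → ℕ)
    (happrox : ∀ s : List A, s.length < n → ∀ a : A,
      |(Phat s a : ℝ) / (Θ s : ℝ) - P s a| ≤ ε)
    (yhat L : List A → ℕ) (hy0 : yhat [] = 2 ^ w) (hL0 : L [] = 0)
    (hstep : ∀ s : List A, s.length < n → 2 ^ w ≤ yhat s → ∀ a : A,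
      ∃ v : ℕ,
        (yhat (s ++ [a]) : ℤ) =
          (⌊((yhat s : ℝ) *
              ((∑ b ∈ Finset.univ.filter (fun b => b ≤ a), Phat s b : ℕ) : ℝ)) /
              (Θ s : ℝ) + 1 / 2⌋ -
           ⌊((yhat s : ℝ) *
              ((∑ b ∈ Finset.univ.filter (fun b => b < a), Phat s b : ℕ) : ℝ)) /
              (Θ s : ℝ) + 1 / 2⌋) * 2 ^ v ∧
        L (s ++ [a]) = L s + v ∧
        2 ^ w ≤ yhat (s ++ [a]) ∧ yhat (s ++ [a]) < 2 ^ (w + 1)) :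
    ∀ c : Fin n → A, (∀ i : Fin n, 0 < P ((List.ofFn c).take i) (c i)) →
      (yhat (List.ofFn c) : ℝ) / 2 ^ (L (List.ofFn c) + w) ≤
        (∏ i : Fin n, P ((List.ofFn c).take i) (c i)) *
          ∏ i : Fin n,
            (1 + (ε + ((2 : ℝ) ^ w)⁻¹) / P ((List.ofFn c).take i) (c i)) := by
  intro c hc
  set cl := List.ofFn c with hcl
  have hlen : cl.length = n := by simp [hcl]
  set t : ℝ := ((2 : ℝ) ^ w)⁻¹ with ht
  clear_value t
  have ht0 : 0 < t := by rw [ht]; positivity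
  have key : ∀ k, k ≤ n → 2 ^ w ≤ yhat (cl.take k) ∧
      (yhat (cl.take k) : ℝ) / 2 ^ (L (cl.take k) + w) ≤
        ∏ i ∈ Finset.range k,
          (if h : i < n then P (cl.take i) (c ⟨i, h⟩) + ε + t else 1) := by
    intro k
    induction k with
    | zero =>
      intro _
      simp only [List.take_zero, hy0, hL0, Finset.range_zero, Finset.prod_empty]
      constructor
      · exact le_rfl
      · rw [zero_add]
        simp
    | succ k ih =>
      intro hk1
      have hk : k < n := hk1
      obtain ⟨h1, h2⟩ := ih (le_of_lt hk)
      set s := cl.take k with hs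
      have hslen : s.length = k := by
        rw [hs, List.length_take, hlen]; omega
      have hslt : s.length < n := by rw [hslen]; exact hk
      set a := c ⟨k, hk⟩ with ha
      clear_value a
      have htake : cl.take (k + 1) = s ++ [a] := by
        rw [hs, ha, hcl]
        rw [List.take_succ]
        congr 1
        simp [List.getElem?_ofFn, hk]
      obtain ⟨v, hv1, hv2, hv3, hv4⟩ := hstep s hslt h1 a
      have hΘ1 := (hΘ s hslt).1
      have hΘR : (0 : ℝ) < (Θ s : ℝ) := by exact_mod_cast hΘ1
      have hyR : (2 : ℝ) ^ w ≤ (yhat s : ℝ) := by exact_mod_cast h1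
      have hy0R : (0 : ℝ) ≤ (yhat s : ℝ) := by positivity
      -- sums
      have hsplit : (∑ b ∈ Finset.univ.filter (fun b => b ≤ a), Phat s b) =
          (∑ b ∈ Finset.univ.filter (fun b => b < a), Phat s b) + Phat s a := by
        have hins : Finset.univ.filter (fun b => b ≤ a) =
            insert a (Finset.univ.filter (fun b => b < a)) := by
          ext b
          simp [le_iff_lt_or_eq, or_comm]
        rw [hins, Finset.sum_insert (by simp)]
        ring
      set Fle : ℝ := ((∑ b ∈ Finset.univ.filter (fun b => b ≤ a), Phat s b : ℕ) : ℝ) with hFle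
      set Flt : ℝ := ((∑ b ∈ Finset.univ.filter (fun b => b < a), Phat s b : ℕ) : ℝ) with hFlt
      have hFdiff : Fle = Flt + (Phat s a : ℝ) := by
        rw [hFle, hFlt]; exact_mod_cast hsplit
      set X : ℝ := (yhat s : ℝ) * Fle / (Θ s : ℝ) + 1 / 2 with hX
      set Z : ℝ := (yhat s : ℝ) * Flt / (Θ s : ℝ) + 1 / 2 with hZ
      have hv1R : (yhat (s ++ [a]) : ℝ) = ((⌊X⌋ : ℝ) - (⌊Z⌋ : ℝ)) * 2 ^ v := by
        have := hv1
        push_cast at this ⊢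
        exact_mod_cast this
      have hXZ : X - Z = (yhat s : ℝ) * (Phat s a : ℝ) / (Θ s : ℝ) := by
        rw [hX, hZ, hFdiff]
        field_simp
        ring
      clear_value X Z Fle Flt
      clear hX hZ hFle hFlt hFdiff hsplit hv1
      -- model error bound
      have hPa : (Phat s a : ℝ) / (Θ s : ℝ) ≤ P s a + ε := by
        have := happrox s hslt a
        have := abs_le.mp this
        linarith [this.1, this.2]
      have hPa0 : 0 < P s a := by
        have := hc ⟨k, hk⟩
        simpa [hs, ha, hcl] using this
      -- floor bound
      have hfloor : (⌊X⌋ : ℝ) - (⌊Z⌋ : ℝ) ≤ (yhat s : ℝ) * (P s a + ε) + 1 := by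
        have h1' : (⌊X⌋ : ℝ) ≤ X := Int.floor_le X
        have h2' : Z - 1 < (⌊Z⌋ : ℝ) := Int.sub_one_lt_floor Z
        have hmul : (yhat s : ℝ) * (Phat s a : ℝ) / (Θ s : ℝ) ≤
            (yhat s : ℝ) * (P s a + ε) := by
          rw [mul_div_assoc]
          exact mul_le_mul_of_nonneg_left hPa hy0R
        nlinarith [hXZ, hmul, h1', h2']
      have hgnn : 0 ≤ P s a + ε + t := by positivity
      have hD : (0 : ℝ) < (2 : ℝ) ^ (L s + w) := by positivity
      have h2v : (0 : ℝ) < (2 : ℝ) ^ v := by positivity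
      refine ⟨htake ▸ hv3, ?_⟩
      rw [htake, Finset.prod_range_succ]
      calc (yhat (s ++ [a]) : ℝ) / 2 ^ (L (s ++ [a]) + w)
          ≤ ((yhat s : ℝ) * (P s a + ε) + 1) / 2 ^ (L s + w) := by
            rw [hv2, hv1R]
            have hpow : (2 : ℝ) ^ (L s + v + w) = 2 ^ (L s + w) * 2 ^ v := by
              rw [show L s + v + w = L s + w + v from by omega, pow_add]
            rw [hpow, div_le_div_iff₀ (by positivity) hD]
            calc ((⌊X⌋ : ℝ) - (⌊Z⌋ : ℝ)) * 2 ^ v * 2 ^ (L s + w)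
                ≤ ((yhat s : ℝ) * (P s a + ε) + 1) * 2 ^ v * 2 ^ (L s + w) := by
                  have := mul_le_mul_of_nonneg_right
                    (mul_le_mul_of_nonneg_right hfloor (le_of_lt h2v)) (le_of_lt hD)
                  linarith
              _ = ((yhat s : ℝ) * (P s a + ε) + 1) * (2 ^ (L s + w) * 2 ^ v) := by ring
        _ ≤ ((yhat s : ℝ) * (P s a + ε + t)) / 2 ^ (L s + w) := by
            gcongr ?x / _
            have h1t : (2 : ℝ) ^ w * t = 1 := by
              rw [ht]; field_simp
            nlinarith [mul_le_mul_of_nonneg_right hyR ht0.le]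
        _ = ((yhat s : ℝ) / 2 ^ (L s + w)) * (P s a + ε + t) := by ring
        _ ≤ (∏ i ∈ Finset.range k,
              (if h : i < n then P (cl.take i) (c ⟨i, h⟩) + ε + t else 1)) *
              (P s a + ε + t) := mul_le_mul_of_nonneg_right h2 hgnn
        _ = (∏ i ∈ Finset.range k,
              (if h : i < n then P (cl.take i) (c ⟨i, h⟩) + ε + t else 1)) *
              (if h : k < n then P (cl.take k) (c ⟨k, h⟩) + ε + t else 1) := by
            rw [dif_pos hk, ← hs, ← ha]
  obtain ⟨_, hfinal⟩ := key n le_rfl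
  have htaken : cl.take n = cl := by
    rw [← hlen]; exact List.take_length
  rw [htaken] at hfinal
  refine hfinal.trans (le_of_eq ?_)
  rw [← Finset.prod_mul_distrib, ← Fin.prod_univ_eq_prod_range]
  apply Finset.prod_congr rfl
  intro i _
  rw [dif_pos i.isLt]
  have hp := hc i
  field_simp
  ring
end
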